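/- arXiv:physics/0511075 — 5 statements merged into one kernel-verified Lean document; each statement's English description precedes it below -/
import Mathlib

section
/- For every u in H and v in V, B(u,v) belongs to H and |B(u,v)| ≤ C₁ |u| ‖v‖, where C₁ = |a|(λ^{-1} + λ) + |b|(λ^{-1} + 1). -/
/-!
Each of the four terms of `B(u,v)_n` has the form `c k_{n+i} v_{n+j} w_n`, where `w_n` is a
component of `u` or of its conjugate, so `|w_n| ≤ |u|`. Writing `k_{n+i} = λ^{i-j} k_{n+j}`, the
term is bounded pointwise by `|c| λ^{i-j} |u|` times a shift of the sequence `A^{1/2} v = (k_n v_n)`,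
whose `ℓ²` norm is at most `‖v‖`. Minkowski's inequality adds up the four constants
`|a| λ⁻¹`, `|b| λ⁻¹`, `|a| λ` and `|b|` to `C₁`.
-/

open scoped BigOperators
open MeasureTheory Filter Topology

noncomputable section

namespace Sabra

/-- Wavenumber of the shell with 0-based index `n` (paper index `n+1`): `k₀ λ^(n+1)`. -/
def kwav (k0 lam : ℝ) (n : ℕ) : ℝ := k0 * lam ^ (n + 1)

/-- Wavenumber for an integer paper index `j`: `k₀ λ^j`. -/
def kz (k0 lam : ℝ) (j : ℤ) : ℝ := k0 * lam ^ j

/-- Extend a sequence `(u₁, u₂, …)` (stored at 0-based indices `0,1,…`) to integer paper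
indices, with the convention `u_j = 0` for `j ≤ 0`. -/
def extz (u : ℕ → ℂ) (j : ℤ) : ℂ := if 0 < j then u (j.toNat - 1) else 0

/-- The sabra shell model bilinear map `B(u,v)`, componentwise: the component with 0-based
index `m` corresponds to the paper index `n = m+1`, and equals
`-i (a k_{n+1} v_{n+2} u*_{n+1} + b k_n v_{n+1} u*_{n-1} + a k_{n-1} u_{n-1} v_{n-2}
  + b k_{n-1} v_{n-1} u_{n-2})`. -/
def sabraB (a b k0 lam : ℝ) (u v : ℕ → ℂ) : ℕ → ℂ := fun m =>
  -Complex.I *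
    ((a : ℂ) * (kz k0 lam ((m : ℤ) + 2) : ℂ) * extz v ((m : ℤ) + 3)
        * starRingEnd ℂ (extz u ((m : ℤ) + 2))
      + (b : ℂ) * (kz k0 lam ((m : ℤ) + 1) : ℂ) * extz v ((m : ℤ) + 2)
        * starRingEnd ℂ (extz u (m : ℤ))
      + (a : ℂ) * (kz k0 lam (m : ℤ) : ℂ) * extz u (m : ℤ) * extz v ((m : ℤ) - 1)
      + (b : ℂ) * (kz k0 lam (m : ℤ) : ℂ) * extz v (m : ℤ) * extz u ((m : ℤ) - 1))

/-- The inner product of `H = ℓ²`: `(u,v) = Σ uₙ vₙ*`. -/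
def Hinner (u v : ℕ → ℂ) : ℂ := ∑' n, u n * starRingEnd ℂ (v n)

/-- The norm of `H = ℓ²`. -/
def Hnorm (u : ℕ → ℂ) : ℝ := Real.sqrt (∑' n, ‖u n‖ ^ 2)

/-- Membership in `H = ℓ²`. -/
def memH (u : ℕ → ℂ) : Prop := Summable (fun n => ‖u n‖ ^ 2)

/-- The norm of `V = D(A^{1/2})`: `‖u‖ = (Σ kₙ² |uₙ|²)^{1/2}`. -/
def Vnorm (k0 lam : ℝ) (u : ℕ → ℂ) : ℝ :=
  Real.sqrt (∑' n, kwav k0 lam n ^ 2 * ‖u n‖ ^ 2)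

/-- Membership in `V = D(A^{1/2})`. -/
def memV (k0 lam : ℝ) (u : ℕ → ℂ) : Prop :=
  Summable (fun n => kwav k0 lam n ^ 2 * ‖u n‖ ^ 2)

/-- The graph norm of `D(A)`: `|Au| = (Σ kₙ⁴ |uₙ|²)^{1/2}`. -/
def DAnorm (k0 lam : ℝ) (u : ℕ → ℂ) : ℝ :=
  Real.sqrt (∑' n, kwav k0 lam n ^ 4 * ‖u n‖ ^ 2)

/-- Membership in `D(A)`. -/
def memDA (k0 lam : ℝ) (u : ℕ → ℂ) : Prop :=
  Summable (fun n => kwav k0 lam n ^ 4 * ‖u n‖ ^ 2)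

/-- The dual norm of `V' = D(A^{-1/2})` (for an element of `V'` represented as a sequence
via the `H`-pairing): `(Σ kₙ⁻² |uₙ|²)^{1/2}`. -/
def VdualNorm (k0 lam : ℝ) (u : ℕ → ℂ) : ℝ :=
  Real.sqrt (∑' n, ‖u n‖ ^ 2 / kwav k0 lam n ^ 2)

/-- The pairing `⟨Au, v⟩ = ((u,v)) = Σ kₙ² uₙ vₙ*`. -/
def Aform (k0 lam : ℝ) (u v : ℕ → ℂ) : ℂ :=
  ∑' n, ((kwav k0 lam n ^ 2 : ℝ) : ℂ) * u n * starRingEnd ℂ (v n)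

/-- The constant `C₁ = |a|(λ⁻¹ + λ) + |b|(λ⁻¹ + 1)`. -/
def C1 (a b lam : ℝ) : ℝ := |a| * (lam⁻¹ + lam) + |b| * (lam⁻¹ + 1)

/-- The Gevrey norm `‖u‖_{G^{p,q}_τ} = (Σ e^{2τ kₙᵖ} kₙ^{2q} |uₙ|²)^{1/2}`. -/
def Gnorm (k0 lam p q τ : ℝ) (u : ℕ → ℂ) : ℝ :=
  Real.sqrt (∑' n, Real.exp (2 * τ * kwav k0 lam n ^ p) * kwav k0 lam n ^ (2 * q) * ‖u n‖ ^ 2)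

/-- Membership in the Gevrey class `G^{p,q}_τ`. -/
def memG (k0 lam p q τ : ℝ) (u : ℕ → ℂ) : Prop :=
  Summable (fun n => Real.exp (2 * τ * kwav k0 lam n ^ p) * kwav k0 lam n ^ (2 * q) * ‖u n‖ ^ 2)

/-- `u : ℝ → (ℕ → ℂ)` is a weak solution of the sabra shell model on `[0,T]` with force `f`
and initial datum `uin`: `u(0) = uin`, `u ∈ L^∞([0,T];H) ∩ L²([0,T];V)`, `u ∈ C([0,T];H)`,
and for every `φ ∈ V` and a.e. `t`, `d/dt (u,φ) + ν⟨Au,φ⟩ + ⟨B(u,u),φ⟩ = ⟨f,φ⟩`. -/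
def IsWeakSolutionOn (ν a b k0 lam T : ℝ) (f : ℝ → ℕ → ℂ) (uin : ℕ → ℂ)
    (u : ℝ → ℕ → ℂ) : Prop :=
  u 0 = uin ∧
  (∀ t ∈ Set.Icc (0 : ℝ) T, memH (u t)) ∧
  (∃ M, ∀ t ∈ Set.Icc (0 : ℝ) T, Hnorm (u t) ≤ M) ∧
  IntegrableOn (fun t => Vnorm k0 lam (u t) ^ 2) (Set.Icc (0 : ℝ) T) ∧
  (∀ φ, memV k0 lam φ →
    ∀ᵐ t ∂(volume.restrict (Set.Ioo (0 : ℝ) T)),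
      HasDerivAt (fun s => Hinner (u s) φ)
        (Hinner (f t) φ - (ν : ℂ) * Aform k0 lam (u t) φ
          - Hinner (sabraB a b k0 lam (u t) (u t)) φ) t) ∧
  (∀ t₀ ∈ Set.Icc (0 : ℝ) T,
    Tendsto (fun t => Hnorm (fun n => u t n - u t₀ n))
      (nhdsWithin t₀ (Set.Icc (0 : ℝ) T)) (nhds 0))

/-- `u : ℝ → (ℕ → ℂ)` is a weak solution of the sabra shell model on `[0,∞)`. -/
def IsWeakSolution (ν a b k0 lam : ℝ) (f : ℝ → ℕ → ℂ) (uin : ℕ → ℂ)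
    (u : ℝ → ℕ → ℂ) : Prop :=
  u 0 = uin ∧
  (∀ t, 0 ≤ t → memH (u t)) ∧
  (∀ T > (0 : ℝ), ∃ M, ∀ t ∈ Set.Icc (0 : ℝ) T, Hnorm (u t) ≤ M) ∧
  (∀ T > (0 : ℝ), IntegrableOn (fun t => Vnorm k0 lam (u t) ^ 2) (Set.Icc (0 : ℝ) T)) ∧
  (∀ φ, memV k0 lam φ →
    ∀ᵐ t ∂(volume.restrict (Set.Ioi (0 : ℝ))),
      HasDerivAt (fun s => Hinner (u s) φ)
        (Hinner (f t) φ - (ν : ℂ) * Aform k0 lam (u t) φ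
          - Hinner (sabraB a b k0 lam (u t) (u t)) φ) t) ∧
  (∀ t₀ ∈ Set.Ici (0 : ℝ),
    Tendsto (fun t => Hnorm (fun n => u t n - u t₀ n))
      (nhdsWithin t₀ (Set.Ici (0 : ℝ))) (nhds 0))

/-- The orthogonal projection onto the span of the first `m` canonical basis vectors. -/
def proj (m : ℕ) (u : ℕ → ℂ) : ℕ → ℂ := fun n => if n < m then u n else 0

/-- The `j`-th shell component in paper (1-based) indexing, with `u_0 = 0`. -/
def shellComp (u : ℕ → ℂ) (j : ℕ) : ℂ := if j = 0 then 0 else u (j - 1)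

lemma memH_iff_memℓp (f : ℕ → ℂ) : memH f ↔ Memℓp f 2 := by
  simp [memH, memℓp_gen_iff (p := 2) (by norm_num)]

lemma Hnorm_eq_norm_lp {f : ℕ → ℂ} (hf : Memℓp f 2) :
    Hnorm f = ‖(⟨f, hf⟩ : lp (fun _ : ℕ => ℂ) 2)‖ := by
  rw [lp.norm_eq_tsum_rpow (by norm_num), Hnorm, Real.sqrt_eq_rpow]
  simp

lemma memH.add {f g : ℕ → ℂ} (hf : memH f) (hg : memH g) : memH (f + g) :=
  (memH_iff_memℓp _).2 (((memH_iff_memℓp f).1 hf).add ((memH_iff_memℓp g).1 hg))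

lemma Hnorm_add_le {f g : ℕ → ℂ} (hf : memH f) (hg : memH g) :
    Hnorm (f + g) ≤ Hnorm f + Hnorm g := by
  rw [memH_iff_memℓp] at hf hg
  rw [Hnorm_eq_norm_lp hf, Hnorm_eq_norm_lp hg, Hnorm_eq_norm_lp (hf.add hg)]
  exact norm_add_le (⟨f, hf⟩ : lp (fun _ : ℕ => ℂ) 2) ⟨g, hg⟩

lemma norm_le_Hnorm {u : ℕ → ℂ} (hu : memH u) (n : ℕ) : ‖u n‖ ≤ Hnorm u :=
  Real.le_sqrt_of_sq_le (hu.le_tsum n fun _ _ => sq_nonneg _)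

lemma norm_extz_le_Hnorm {u : ℕ → ℂ} (hu : memH u) (j : ℤ) : ‖extz u j‖ ≤ Hnorm u := by
  unfold extz
  split_ifs
  · exact norm_le_Hnorm hu _
  · simp [Hnorm]

lemma memH_of_norm_le {f g : ℕ → ℂ} {C : ℝ} (hg : memH g) (hfg : ∀ n, ‖f n‖ ≤ C * ‖g n‖) :
    memH f := by
  refine .of_nonneg_of_le (fun n => sq_nonneg _) (fun n => ?_) (hg.mul_left (C ^ 2))
  simpa [mul_pow] using pow_le_pow_left₀ (norm_nonneg _) (hfg n) 2

lemma Hnorm_le_of_norm_le {f g : ℕ → ℂ} {C : ℝ} (hC : 0 ≤ C) (hg : memH g)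
    (hfg : ∀ n, ‖f n‖ ≤ C * ‖g n‖) : Hnorm f ≤ C * Hnorm g := by
  have hsq : ∀ n, ‖f n‖ ^ 2 ≤ C ^ 2 * ‖g n‖ ^ 2 := fun n => by
    simpa [mul_pow] using pow_le_pow_left₀ (norm_nonneg _) (hfg n) 2
  calc Hnorm f ≤ √(C ^ 2 * ∑' n, ‖g n‖ ^ 2) := by
        rw [← tsum_mul_left]
        exact Real.sqrt_le_sqrt ((memH_of_norm_le hg hfg).tsum_le_tsum hsq (hg.mul_left _))
    _ = C * Hnorm g := by rw [Real.sqrt_mul (sq_nonneg C), Real.sqrt_sq hC, Hnorm]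

lemma extz_eq_zero_of_notMem_range (u : ℕ → ℂ) {j : ℤ}
    (hj : j ∉ Set.range fun n : ℕ => (n : ℤ) + 1) : extz u j = 0 := by
  refine if_neg fun hpos => hj ⟨j.toNat - 1, ?_⟩
  change ((j.toNat - 1 : ℕ) : ℤ) + 1 = j
  omega

lemma memH_extz_shift {u : ℕ → ℂ} (hu : memH u) (j : ℤ) :
    memH (fun m : ℕ => extz u (m + j)) ∧ Hnorm (fun m : ℕ => extz u (m + j)) ≤ Hnorm u := by
  set F : ℤ → ℝ := fun i => ‖extz u i‖ ^ 2
  have hsucc : Function.Injective fun n : ℕ => (n : ℤ) + 1 := fun m n h => by simpa using h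
  have hshift : Function.Injective fun m : ℕ => (m : ℤ) + j := fun m n h => by simpa using h
  have hFu : (F ∘ fun n : ℕ => (n : ℤ) + 1) = fun n => ‖u n‖ ^ 2 := by
    ext n; simp [F, extz]
  have hF0 : ∀ i ∉ Set.range fun n : ℕ => (n : ℤ) + 1, F i = 0 := fun i hi => by
    simp [F, extz_eq_zero_of_notMem_range u hi]
  have hF : Summable F := (hsucc.summable_iff hF0).1 (hFu ▸ hu)
  have htsum : ∑' i, F i = ∑' n, ‖u n‖ ^ 2 := by
    rw [← hFu, ← hsucc.tsum_eq fun i hi => by_contra fun h => hi (hF0 i h)]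
    rfl
  refine ⟨hF.comp_injective hshift, Real.sqrt_le_sqrt ?_⟩
  exact (tsum_comp_le_tsum_of_inj hF (fun _ => sq_nonneg _) hshift).trans htsum.le

def sqrtA (k0 lam : ℝ) (v : ℕ → ℂ) : ℕ → ℂ := fun n => (kwav k0 lam n : ℂ) * v n

lemma memH_sqrtA_iff {k0 lam : ℝ} {v : ℕ → ℂ} : memH (sqrtA k0 lam v) ↔ memV k0 lam v := by
  simp [memH, memV, sqrtA, mul_pow]

lemma Hnorm_sqrtA (k0 lam : ℝ) (v : ℕ → ℂ) : Hnorm (sqrtA k0 lam v) = Vnorm k0 lam v := by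
  simp [Hnorm, Vnorm, sqrtA, mul_pow]

lemma extz_sqrtA (k0 lam : ℝ) (v : ℕ → ℂ) (j : ℤ) :
    extz (sqrtA k0 lam v) j = (kz k0 lam j : ℂ) * extz v j := by
  unfold extz sqrtA kwav kz
  split_ifs with hj
  · obtain ⟨n, rfl⟩ : ∃ n : ℕ, j = n + 1 := ⟨j.toNat - 1, by omega⟩
    simp [← zpow_natCast]
  · simp

lemma kz_mul_extz {k0 lam : ℝ} (hlam : lam ≠ 0) (v : ℕ → ℂ) (i j : ℤ) :
    (kz k0 lam i : ℂ) * extz v j = ((lam ^ (i - j) : ℝ) : ℂ) * extz (sqrtA k0 lam v) j := by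
  rw [extz_sqrtA, kz, kz, ← mul_assoc, ← Complex.ofReal_mul, mul_left_comm, ← zpow_add₀ hlam,
    sub_add_cancel]

def triadTerm (k0 lam : ℝ) (c : ℂ) (i j : ℤ) (U v : ℕ → ℂ) : ℕ → ℂ :=
  fun m => c * kz k0 lam (m + i) * extz v (m + j) * U m

lemma norm_triadTerm_le {k0 lam M : ℝ} (hlam : 0 < lam) (c : ℂ) (i j : ℤ) {U : ℕ → ℂ}
    (hU : ∀ m, ‖U m‖ ≤ M) (v : ℕ → ℂ) (m : ℕ) :
    ‖triadTerm k0 lam c i j U v m‖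
      ≤ ‖c‖ * lam ^ (i - j) * M * ‖extz (sqrtA k0 lam v) (m + j)‖ := by
  have hexp : ((m : ℤ) + i) - (m + j) = i - j := by ring
  rw [triadTerm, mul_assoc c, kz_mul_extz hlam.ne', hexp, norm_mul, norm_mul, norm_mul,
    Complex.norm_real, Real.norm_of_nonneg (zpow_nonneg hlam.le _)]
  calc _ = ‖c‖ * lam ^ (i - j) * ‖U m‖ * ‖extz (sqrtA k0 lam v) (m + j)‖ := by ring
    _ ≤ _ := by gcongr; exact hU m

lemma memH_triadTerm {k0 lam M : ℝ} (hlam : 0 < lam) (c : ℂ) (i j : ℤ) {U v : ℕ → ℂ}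
    (hU : ∀ m, ‖U m‖ ≤ M) (hv : memV k0 lam v) :
    memH (triadTerm k0 lam c i j U v) ∧
      Hnorm (triadTerm k0 lam c i j U v) ≤ ‖c‖ * lam ^ (i - j) * M * Vnorm k0 lam v := by
  have hM : 0 ≤ M := (norm_nonneg _).trans (hU 0)
  obtain ⟨hshift, hshift_le⟩ := memH_extz_shift (memH_sqrtA_iff.2 hv) j
  refine ⟨memH_of_norm_le hshift (norm_triadTerm_le hlam c i j hU v), ?_⟩
  calc _ ≤ ‖c‖ * lam ^ (i - j) * M * Hnorm fun m : ℕ => extz (sqrtA k0 lam v) (m + j) :=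
        Hnorm_le_of_norm_le (by positivity) hshift (norm_triadTerm_le hlam c i j hU v)
    _ ≤ _ := by
        rw [← Hnorm_sqrtA]
        gcongr

lemma sabraB_eq_triadTerm (a b k0 lam : ℝ) (u v : ℕ → ℂ) :
    sabraB a b k0 lam u v =
      triadTerm k0 lam (-Complex.I * a) 2 3 (fun m => starRingEnd ℂ (extz u (m + 2))) v
        + triadTerm k0 lam (-Complex.I * b) 1 2 (fun m => starRingEnd ℂ (extz u m)) v
        + triadTerm k0 lam (-Complex.I * a) 0 (-1) (fun m => extz u m) v
        + triadTerm k0 lam (-Complex.I * b) 0 0 (fun m => extz u (m - 1)) v := by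
  ext m
  simp only [sabraB, triadTerm, Pi.add_apply, add_zero, ← sub_eq_add_neg]
  ring

theorem sabra_nonlinear_H_V_to_H_general
    (a b k0 lam : ℝ) (hlam : 1 < lam)
    (u v : ℕ → ℂ) (hu : memH u) (hv : memV k0 lam v) :
    memH (sabraB a b k0 lam u v) ∧
      Hnorm (sabraB a b k0 lam u v) ≤ C1 a b lam * Hnorm u * Vnorm k0 lam v := by
  have hlam0 : 0 < lam := zero_lt_one.trans hlam
  have hU : ∀ j, ‖extz u j‖ ≤ Hnorm u := norm_extz_le_Hnorm hu
  obtain ⟨h₁, b₁⟩ := memH_triadTerm hlam0 (-Complex.I * a) 2 3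
    (U := fun m => starRingEnd ℂ (extz u (m + 2))) (fun _ => by simpa using hU _) hv
  obtain ⟨h₂, b₂⟩ := memH_triadTerm hlam0 (-Complex.I * b) 1 2
    (U := fun m => starRingEnd ℂ (extz u m)) (fun _ => by simpa using hU _) hv
  obtain ⟨h₃, b₃⟩ := memH_triadTerm hlam0 (-Complex.I * a) 0 (-1)
    (U := fun m => extz u m) (fun _ => hU _) hv
  obtain ⟨h₄, b₄⟩ := memH_triadTerm hlam0 (-Complex.I * b) 0 0
    (U := fun m => extz u (m - 1)) (fun _ => hU _) hv
  have h₁₂ := h₁.add h₂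
  have h₁₂₃ := h₁₂.add h₃
  rw [sabraB_eq_triadTerm]
  refine ⟨h₁₂₃.add h₄, ?_⟩
  grw [Hnorm_add_le h₁₂₃ h₄, Hnorm_add_le h₁₂ h₃, Hnorm_add_le h₁ h₂, b₁, b₂, b₃, b₄]
  refine le_of_eq ?_
  norm_num [C1]
  ring

/-- for every `u ∈ H` and `v ∈ V`, `B(u,v) ∈ H` and
`|B(u,v)| ≤ C₁ |u| ‖v‖` with `C₁ = |a|(λ⁻¹ + λ) + |b|(λ⁻¹ + 1)`. -/
theorem sabra_nonlinear_H_V_to_H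
    (a b k0 lam : ℝ) (hk0 : 0 < k0) (hlam : 1 < lam)
    (u v : ℕ → ℂ) (hu : memH u) (hv : memV k0 lam v) :
    memH (sabraB a b k0 lam u v) ∧
      Hnorm (sabraB a b k0 lam u v) ≤ C1 a b lam * Hnorm u * Vnorm k0 lam v :=
  sabra_nonlinear_H_V_to_H_general a b k0 lam hlam u v hu hv

end Sabra
end
end

section
/- For every u, v in H, B(u,v) defines a bounded linear functional on V, and its dual norm satisfies ‖B(u,v)‖_{V'} ≤ C₁ |u| |v|, where C₁ = |a|(λ^{-1} + λ) + |b|(λ^{-1} + 1); explicitly, |⟨B(u,v), w⟩| ≤ C₁ |u| |v| ‖w‖ for all w in V. -/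
open scoped BigOperators
open MeasureTheory Filter Topology

noncomputable section

namespace Sabra

/-! Each component of `B(u,v)` is a sum of four products `k u_i v_j` with `i, j` within two
shells of `n`, and `k_{n+1} = λ k_n`. Bounding the `u` factor by `sup_i |u_i| ≤ |u|`, the
remaining sums `Σ_n k_n |w_n| |v_{n+c}|` are at most `‖w‖ |v|` by Cauchy–Schwarz; the four
shifts contribute the coefficients `|a| λ`, `|b|`, `|a| λ⁻¹`, `|b| λ⁻¹` that make up `C₁`. -/

lemma Hnorm_nonneg (u : ℕ → ℂ) : 0 ≤ Hnorm u := Real.sqrt_nonneg _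

lemma extz_natCast_add_one (u : ℕ → ℂ) (n : ℕ) : extz u ((n : ℤ) + 1) = u n := by
  simp [extz]

lemma hasSum_norm_extz_sq {u : ℕ → ℂ} (hu : memH u) :
    HasSum (fun j : ℤ => ‖extz u j‖ ^ 2) (Hnorm u ^ 2) := by
  have hinj : Function.Injective (fun n : ℕ => (n : ℤ) + 1) := fun m n h => by simpa using h
  refine (hinj.hasSum_iff fun j hj => ?_).mp ?_
  · have : ¬ 0 < j := fun hj0 => hj ⟨j.toNat - 1, by simp only; omega⟩
    simp [extz, this]
  · rw [Hnorm, Real.sq_sqrt (tsum_nonneg fun n => sq_nonneg _)]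
    simpa [Function.comp_def, extz_natCast_add_one] using hu.hasSum

lemma summable_norm_extz_shift_sq {u : ℕ → ℂ} (hu : memH u) (c : ℤ) :
    Summable (fun m : ℕ => ‖extz u ((m : ℤ) + c)‖ ^ 2) :=
  (hasSum_norm_extz_sq hu).summable.comp_injective fun m n h => by simpa using h

lemma tsum_norm_extz_shift_sq_le {u : ℕ → ℂ} (hu : memH u) (c : ℤ) :
    ∑' m : ℕ, ‖extz u ((m : ℤ) + c)‖ ^ 2 ≤ Hnorm u ^ 2 := by
  rw [← (hasSum_norm_extz_sq hu).tsum_eq]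
  exact (summable_norm_extz_shift_sq hu c).tsum_le_tsum_of_inj _ (fun m n h => by simpa using h)
    (fun _ _ => sq_nonneg _) (fun _ => le_rfl) (hasSum_norm_extz_sq hu).summable

def shiftTerm (k0 lam : ℝ) (w v : ℕ → ℂ) (c : ℤ) (m : ℕ) : ℝ :=
  |kwav k0 lam m| * ‖w m‖ * ‖extz v ((m : ℤ) + c)‖

lemma exists_hasSum_shiftTerm_le {k0 lam : ℝ} {w v : ℕ → ℂ} (hw : memV k0 lam w) (hv : memH v)
    (c : ℤ) : ∃ S, S ≤ Vnorm k0 lam w * Hnorm v ∧ HasSum (shiftTerm k0 lam w v c) S := by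
  set B := Real.sqrt (∑' m : ℕ, ‖extz v ((m : ℤ) + c)‖ ^ 2)
  have hwsum :
      HasSum (fun m => (|kwav k0 lam m| * ‖w m‖) ^ (2 : ℝ)) (Vnorm k0 lam w ^ (2 : ℝ)) := by
    simp only [Real.rpow_two, Vnorm, mul_pow, sq_abs]
    rw [Real.sq_sqrt (tsum_nonneg fun m => by positivity)]
    exact hw.hasSum
  have hvsum : HasSum (fun m : ℕ => ‖extz v ((m : ℤ) + c)‖ ^ (2 : ℝ)) (B ^ (2 : ℝ)) := by
    simp only [Real.rpow_two, B]
    rw [Real.sq_sqrt (tsum_nonneg fun m => by positivity)]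
    exact (summable_norm_extz_shift_sq hv c).hasSum
  obtain ⟨S, -, hSle, hS⟩ := Real.inner_le_Lp_mul_Lq_hasSum_of_nonneg .two_two
    (Real.sqrt_nonneg _) (Real.sqrt_nonneg _) (fun m => by positivity) (fun m => by positivity)
    hwsum hvsum
  have hB : B ≤ Hnorm v :=
    (Real.sqrt_le_sqrt (tsum_norm_extz_shift_sq_le hv c)).trans_eq (Real.sqrt_sq (Hnorm_nonneg v))
  exact ⟨S, hSle.trans (mul_le_mul_of_nonneg_left hB (Real.sqrt_nonneg _)), hS⟩

lemma kz_add_one {k0 lam : ℝ} (hlam : lam ≠ 0) (j : ℤ) :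
    kz k0 lam (j + 1) = kz k0 lam j * lam := by
  rw [kz, kz, zpow_add_one₀ hlam, mul_assoc]

lemma kz_natCast_add_one (k0 lam : ℝ) (m : ℕ) : kz k0 lam ((m : ℤ) + 1) = kwav k0 lam m := by
  rw [kz, kwav, ← zpow_natCast]
  push_cast
  rfl

lemma abs_kz_natCast_add_two {k0 lam : ℝ} (hlam : 0 < lam) (m : ℕ) :
    |kz k0 lam ((m : ℤ) + 2)| = lam * |kwav k0 lam m| := by
  rw [show (m : ℤ) + 2 = m + 1 + 1 by ring, kz_add_one hlam.ne', kz_natCast_add_one, abs_mul,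
    abs_of_pos hlam, mul_comm]

lemma abs_kz_natCast {k0 lam : ℝ} (hlam : 0 < lam) (m : ℕ) :
    |kz k0 lam m| = lam⁻¹ * |kwav k0 lam m| := by
  rw [← kz_natCast_add_one, kz_add_one hlam.ne', abs_mul, abs_of_pos hlam]
  field_simp

lemma norm_sabraB_mul_conj_le (a b : ℝ) {k0 lam : ℝ} (hlam : 0 < lam) {u : ℕ → ℂ} (hu : memH u)
    (v w : ℕ → ℂ) (m : ℕ) :
    ‖sabraB a b k0 lam u v m * starRingEnd ℂ (w m)‖ ≤
      Hnorm u * (|a| * lam * shiftTerm k0 lam w v 3 m + |b| * shiftTerm k0 lam w v 2 m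
        + |a| * lam⁻¹ * shiftTerm k0 lam w v (-1) m + |b| * lam⁻¹ * shiftTerm k0 lam w v 0 m) := by
  have hu₂ := norm_extz_le_Hnorm hu ((m : ℤ) + 2)
  have hu₀ := norm_extz_le_Hnorm hu m
  have hu₁ := norm_extz_le_Hnorm hu ((m : ℤ) - 1)
  rw [sabraB, norm_mul, norm_mul, norm_neg, Complex.norm_I, one_mul, RCLike.norm_conj]
  refine (mul_le_mul_of_nonneg_right norm_add₄_le (norm_nonneg _)).trans ?_
  simp only [shiftTerm, norm_mul, Complex.norm_real, Real.norm_eq_abs, RCLike.norm_conj,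
    abs_kz_natCast_add_two hlam, kz_natCast_add_one, abs_kz_natCast hlam, add_zero,
    ← sub_eq_add_neg]
  set k := |kwav k0 lam m|
  calc _ ≤ (|a| * (lam * k) * ‖extz v (m + 3)‖ * Hnorm u + |b| * k * ‖extz v (m + 2)‖ * Hnorm u
          + |a| * (lam⁻¹ * k) * Hnorm u * ‖extz v (m - 1)‖
          + |b| * (lam⁻¹ * k) * ‖extz v m‖ * Hnorm u) * ‖w m‖ := by gcongr
    _ = _ := by ring

theorem sabra_nonlinear_H_H_to_Vdual_general
    (a b k0 lam : ℝ) (hlam : 1 < lam)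
    (u v : ℕ → ℂ) (hu : memH u) (hv : memH v) :
    ∀ w, memV k0 lam w →
      ‖Hinner (sabraB a b k0 lam u v) w‖ ≤ C1 a b lam * Hnorm u * Hnorm v * Vnorm k0 lam w := by
  intro w hw
  have hlam_pos : 0 < lam := one_pos.trans hlam
  obtain ⟨S₃, hS₃, h₃⟩ := exists_hasSum_shiftTerm_le hw hv 3
  obtain ⟨S₂, hS₂, h₂⟩ := exists_hasSum_shiftTerm_le hw hv 2
  obtain ⟨S₁, hS₁, h₁⟩ := exists_hasSum_shiftTerm_le hw hv (-1)
  obtain ⟨S₀, hS₀, h₀⟩ := exists_hasSum_shiftTerm_le hw hv 0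
  set X := Vnorm k0 lam w * Hnorm v with hX
  have hsum := ((((h₃.mul_left (|a| * lam)).add (h₂.mul_left |b|)).add
    (h₁.mul_left (|a| * lam⁻¹))).add (h₀.mul_left (|b| * lam⁻¹))).mul_left (Hnorm u)
  calc ‖Hinner (sabraB a b k0 lam u v) w‖
      ≤ Hnorm u * (|a| * lam * S₃ + |b| * S₂ + |a| * lam⁻¹ * S₁ + |b| * lam⁻¹ * S₀) :=
        tsum_of_norm_bounded hsum (norm_sabraB_mul_conj_le a b hlam_pos hu v w)
    _ ≤ Hnorm u * (|a| * lam * X + |b| * X + |a| * lam⁻¹ * X + |b| * lam⁻¹ * X) := by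
        gcongr
        exact Hnorm_nonneg u
    _ = C1 a b lam * Hnorm u * Hnorm v * Vnorm k0 lam w := by rw [C1, hX]; ring

/-- for every `u, v ∈ H`, `B(u,v)` is a bounded linear functional on `V` with
`|⟨B(u,v), w⟩| ≤ C₁ |u| |v| ‖w‖` for all `w ∈ V`, where
`C₁ = |a|(λ⁻¹ + λ) + |b|(λ⁻¹ + 1)`; in particular `‖B(u,v)‖_{V'} ≤ C₁ |u| |v|`. -/
theorem sabra_nonlinear_H_H_to_Vdual
    (a b k0 lam : ℝ) (hk0 : 0 < k0) (hlam : 1 < lam)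
    (u v : ℕ → ℂ) (hu : memH u) (hv : memH v) :
    ∀ w, memV k0 lam w →
      ‖Hinner (sabraB a b k0 lam u v) w‖ ≤ C1 a b lam * Hnorm u * Hnorm v * Vnorm k0 lam w :=
  sabra_nonlinear_H_H_to_Vdual_general a b k0 lam hlam u v hu hv

end Sabra
end
end

section
/- For every u in H and v in D(A), B(u,v) belongs to V and ‖B(u,v)‖ ≤ C₃ |u| |Av|, where C₃ = |a|(λ³ + λ^{-3}) + |b|(λ + λ^{-2}). -/
open scoped BigOperators
open MeasureTheory Filter Topology

noncomputable section

namespace Sabra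

/-! ### Auxiliary lemmas for STATEMENT 3 -/

lemma extz_coe' (u : ℕ → ℂ) (k : ℕ) : extz u ((k : ℤ) + 1) = u k := by
  have h : (0:ℤ) < (k:ℤ) + 1 := by positivity
  have h2 : ((k:ℤ) + 1).toNat - 1 = k := by omega
  rw [extz, if_pos h, h2]

lemma extz_nonpos' (u : ℕ → ℂ) (j : ℤ) (h : j ≤ 0) : extz u j = 0 := by
  rw [extz, if_neg (by omega)]

lemma kz_coe' (k0 lam : ℝ) (k : ℕ) : kz k0 lam (k : ℤ) = k0 * lam ^ k := by
  rw [kz, zpow_natCast]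

lemma norm_rpow_eq_sq' (h : ℕ → ℝ) :
    (fun n => ‖h n‖ ^ (2 : ENNReal).toReal) = fun n => h n ^ 2 := by
  funext n
  rw [ENNReal.toReal_ofNat, show ((2:ℝ)) = ((2:ℕ):ℝ) by norm_num, Real.rpow_natCast,
    Real.norm_eq_abs, sq_abs]

/-- ℓ² triangle inequality for real sequences. -/
lemma l2tri (f g : ℕ → ℝ) (hf : Summable fun n => f n ^ 2) (hg : Summable fun n => g n ^ 2) :
    Summable (fun n => (f n + g n) ^ 2) ∧
    Real.sqrt (∑' n, (f n + g n) ^ 2) ≤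
      Real.sqrt (∑' n, f n ^ 2) + Real.sqrt (∑' n, g n ^ 2) := by
  have h2 : (0:ℝ) < (2 : ENNReal).toReal := by norm_num
  have hFm : Memℓp f 2 := memℓp_gen (by rw [norm_rpow_eq_sq']; exact hf)
  have hGm : Memℓp g 2 := memℓp_gen (by rw [norm_rpow_eq_sq']; exact hg)
  set F : lp (fun _ : ℕ => ℝ) 2 := ⟨f, hFm⟩
  set G : lp (fun _ : ℕ => ℝ) 2 := ⟨g, hGm⟩
  have hFG : ⇑(F + G) = fun n => f n + g n := by
    rw [lp.coeFn_add]; rfl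
  have hsum : Summable (fun n => (f n + g n) ^ 2) := by
    have := (lp.memℓp (F + G)).summable h2
    rw [hFG] at this
    rwa [norm_rpow_eq_sq' (fun n => f n + g n)] at this
  refine ⟨hsum, ?_⟩
  have nrm : ∀ (h : ℕ → ℝ) (hh : Memℓp h 2),
      ‖(⟨h, hh⟩ : lp (fun _ : ℕ => ℝ) 2)‖ = Real.sqrt (∑' n, h n ^ 2) := by
    intro h hh
    rw [lp.norm_eq_tsum_rpow h2, Real.sqrt_eq_rpow]
    rw [show (fun i => ‖(⟨h, hh⟩ : lp (fun _ : ℕ => ℝ) 2) i‖ ^ (2 : ENNReal).toReal)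
        = fun n => h n ^ 2 from norm_rpow_eq_sq' h]
    norm_num
  have normF := nrm f hFm
  have normG := nrm g hGm
  have normFG : ‖F + G‖ = Real.sqrt (∑' n, (f n + g n) ^ 2) := by
    have : F + G = ⟨fun n => f n + g n, by rw [← hFG]; exact lp.memℓp _⟩ := by
      apply Subtype.ext; exact hFG
    rw [this]; exact nrm _ _
  calc Real.sqrt (∑' n, (f n + g n) ^ 2) = ‖F + G‖ := normFG.symm
    _ ≤ ‖F‖ + ‖G‖ := norm_add_le F G
    _ = _ := by rw [normF, normG]

lemma Abound {p K r Q x y c W : ℝ} (hc : 0 ≤ c) (hr : 0 ≤ r) (hy : 0 ≤ y)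
    (hpK : p * K = r * Q) (hQx : Q * x ≤ W) :
    p * (c * K * x * y) ≤ c * r * W * y := by
  have h1 : p * (c * K * x * y) = c * ((p * K) * x) * y := by ring
  rw [h1, hpK]
  have h2 : c * (r * Q * x) * y = (c * r) * (Q * x) * y := by ring
  rw [h2]
  calc (c * r) * (Q * x) * y ≤ (c * r) * W * y :=
        mul_le_mul_of_nonneg_right (mul_le_mul_of_nonneg_left hQx (mul_nonneg hc hr)) hy
    _ = c * r * W * y := by ring

lemma norm_term (c k : ℝ) (hk : 0 ≤ k) (z w : ℂ) :
    ‖(c : ℂ) * (k : ℂ) * z * w‖ = |c| * k * ‖z‖ * ‖w‖ := by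
  rw [norm_mul, norm_mul, norm_mul, Complex.norm_real, Complex.norm_real,
    Real.norm_eq_abs, Real.norm_eq_abs, abs_of_nonneg hk]

lemma norm_term' (c k : ℝ) (hk : 0 ≤ k) (z w : ℂ) :
    ‖(c : ℂ) * (k : ℂ) * z * starRingEnd ℂ w‖ = |c| * k * ‖z‖ * ‖w‖ := by
  rw [norm_term c k hk, RCLike.norm_conj]

lemma norm_neg_I_mul_add4 (z1 z2 z3 z4 : ℂ) :
    ‖-Complex.I * (z1 + z2 + z3 + z4)‖ ≤ ‖z1‖ + ‖z2‖ + ‖z3‖ + ‖z4‖ := by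
  rw [norm_mul, norm_neg, Complex.norm_I, one_mul]
  calc ‖z1 + z2 + z3 + z4‖ ≤ ‖z1 + z2 + z3‖ + ‖z4‖ := norm_add_le _ _
    _ ≤ (‖z1 + z2‖ + ‖z3‖) + ‖z4‖ := by
        have := norm_add_le (z1 + z2) z3; linarith
    _ ≤ ‖z1‖ + ‖z2‖ + ‖z3‖ + ‖z4‖ := by
        have := norm_add_le z1 z2; linarith

/-- The key pointwise estimate. -/
lemma key_pointwise (a b k0 lam : ℝ) (hk0 : 0 < k0) (hlam0 : 0 < lam) (u v : ℕ → ℂ)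
    (W : ℝ) (hW : 0 ≤ W) (hWp : ∀ j, kwav k0 lam j ^ 2 * ‖v j‖ ≤ W) (m : ℕ) :
    kwav k0 lam m * ‖sabraB a b k0 lam u v m‖ ≤
      |a| * (lam ^ 3)⁻¹ * W * ‖u (m + 1)‖ +
        ((|b| * (lam ^ 2)⁻¹ + |a| * lam ^ 3) * W * ‖extz u (m : ℤ)‖ +
          |b| * lam * W * ‖extz u ((m : ℤ) - 1)‖) := by
  have hl0 : lam ≠ 0 := ne_of_gt hlam0
  have hknn : (0:ℝ) ≤ kwav k0 lam m :=
    le_of_lt (show (0:ℝ) < kwav k0 lam m from mul_pos hk0 (pow_pos hlam0 (m+1)))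
  have hB : ‖sabraB a b k0 lam u v m‖ ≤
      ‖(a : ℂ) * (kz k0 lam ((m : ℤ) + 2) : ℂ) * extz v ((m : ℤ) + 3)
        * starRingEnd ℂ (extz u ((m : ℤ) + 2))‖
      + ‖(b : ℂ) * (kz k0 lam ((m : ℤ) + 1) : ℂ) * extz v ((m : ℤ) + 2)
        * starRingEnd ℂ (extz u (m : ℤ))‖
      + ‖(a : ℂ) * (kz k0 lam (m : ℤ) : ℂ) * extz u (m : ℤ) * extz v ((m : ℤ) - 1)‖
      + ‖(b : ℂ) * (kz k0 lam (m : ℤ) : ℂ) * extz v (m : ℤ) * extz u ((m : ℤ) - 1)‖ := by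
    simp only [sabraB]
    exact norm_neg_I_mul_add4 _ _ _ _
  have hmul : kwav k0 lam m * ‖sabraB a b k0 lam u v m‖ ≤
      kwav k0 lam m * (‖(a : ℂ) * (kz k0 lam ((m : ℤ) + 2) : ℂ) * extz v ((m : ℤ) + 3)
        * starRingEnd ℂ (extz u ((m : ℤ) + 2))‖
      + ‖(b : ℂ) * (kz k0 lam ((m : ℤ) + 1) : ℂ) * extz v ((m : ℤ) + 2)
        * starRingEnd ℂ (extz u (m : ℤ))‖
      + ‖(a : ℂ) * (kz k0 lam (m : ℤ) : ℂ) * extz u (m : ℤ) * extz v ((m : ℤ) - 1)‖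
      + ‖(b : ℂ) * (kz k0 lam (m : ℤ) : ℂ) * extz v (m : ℤ) * extz u ((m : ℤ) - 1)‖) :=
    mul_le_mul_of_nonneg_left hB hknn
  -- Term 1
  have N1 : ‖(a : ℂ) * (kz k0 lam ((m : ℤ) + 2) : ℂ) * extz v ((m : ℤ) + 3)
      * starRingEnd ℂ (extz u ((m : ℤ) + 2))‖
      = |a| * (k0 * lam ^ (m + 2)) * ‖v (m + 2)‖ * ‖u (m + 1)‖ := by
    rw [show ((m : ℤ) + 3) = (((m + 2 : ℕ)) : ℤ) + 1 by push_cast; ring, extz_coe',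
      show ((m : ℤ) + 2) = (((m + 1 : ℕ)) : ℤ) + 1 by push_cast; ring, extz_coe',
      show ((((m + 1 : ℕ)) : ℤ) + 1) = (((m + 2 : ℕ)) : ℤ) by push_cast; ring, kz_coe']
    exact norm_term' a _ (by positivity) _ _
  have A1 : kwav k0 lam m * ‖(a : ℂ) * (kz k0 lam ((m : ℤ) + 2) : ℂ) * extz v ((m : ℤ) + 3)
      * starRingEnd ℂ (extz u ((m : ℤ) + 2))‖ ≤ |a| * (lam ^ 3)⁻¹ * W * ‖u (m + 1)‖ := by
    rw [N1]
    refine Abound (abs_nonneg a) (by positivity) (norm_nonneg _) ?_ (hWp (m + 2))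
    simp only [kwav]
    field_simp
    ring
  -- Term 2
  have N2 : ‖(b : ℂ) * (kz k0 lam ((m : ℤ) + 1) : ℂ) * extz v ((m : ℤ) + 2)
      * starRingEnd ℂ (extz u (m : ℤ))‖
      = |b| * (k0 * lam ^ (m + 1)) * ‖v (m + 1)‖ * ‖extz u (m : ℤ)‖ := by
    rw [show ((m : ℤ) + 2) = (((m + 1 : ℕ)) : ℤ) + 1 by push_cast; ring, extz_coe',
      show ((m : ℤ) + 1) = (((m + 1 : ℕ)) : ℤ) by push_cast; ring, kz_coe']
    exact norm_term' b _ (by positivity) _ _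
  have A2 : kwav k0 lam m * ‖(b : ℂ) * (kz k0 lam ((m : ℤ) + 1) : ℂ) * extz v ((m : ℤ) + 2)
      * starRingEnd ℂ (extz u (m : ℤ))‖ ≤ |b| * (lam ^ 2)⁻¹ * W * ‖extz u (m : ℤ)‖ := by
    rw [N2]
    refine Abound (abs_nonneg b) (by positivity) (norm_nonneg _) ?_ (hWp (m + 1))
    simp only [kwav]
    field_simp
    ring
  -- Term 3
  have A3 : kwav k0 lam m * ‖(a : ℂ) * (kz k0 lam (m : ℤ) : ℂ) * extz u (m : ℤ)
      * extz v ((m : ℤ) - 1)‖ ≤ |a| * lam ^ 3 * W * ‖extz u (m : ℤ)‖ := by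
    match m with
    | 0 =>
      rw [extz_nonpos' u ((0:ℕ) : ℤ) (by norm_num)]
      simp only [mul_zero, zero_mul, norm_zero]
      exact le_rfl
    | 1 =>
      rw [show (((1:ℕ) : ℤ) - 1) = (0 : ℤ) by norm_num, extz_nonpos' v 0 le_rfl]
      simp only [mul_zero, norm_zero]
      exact mul_nonneg (mul_nonneg (mul_nonneg (abs_nonneg a) (by positivity)) hW)
        (norm_nonneg _)
    | (n+2) =>
      have N3 : ‖(a : ℂ) * (kz k0 lam ((n + 2 : ℕ) : ℤ) : ℂ) * extz u ((n + 2 : ℕ) : ℤ)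
          * extz v (((n + 2 : ℕ) : ℤ) - 1)‖
          = |a| * (k0 * lam ^ (n + 2)) * ‖u (n + 1)‖ * ‖v n‖ := by
        rw [show (((n + 2 : ℕ)) : ℤ) - 1 = ((n : ℕ) : ℤ) + 1 by push_cast; ring, extz_coe',
          show (((n + 2 : ℕ)) : ℤ) = (((n + 1 : ℕ)) : ℤ) + 1 by push_cast; ring, extz_coe',
          show ((((n + 1 : ℕ)) : ℤ) + 1) = (((n + 2 : ℕ)) : ℤ) by push_cast; ring, kz_coe']
        exact norm_term a _ (by positivity) _ _
      rw [N3, show (((n + 2 : ℕ)) : ℤ) = (((n + 1 : ℕ)) : ℤ) + 1 by push_cast; ring,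
        extz_coe']
      have hpK : kwav k0 lam (n + 2) * (k0 * lam ^ (n + 2)) = lam ^ 3 * kwav k0 lam n ^ 2 := by
        simp only [kwav]; ring
      have h := Abound (p := kwav k0 lam (n+2)) (abs_nonneg a) (le_of_lt (by positivity :
        (0:ℝ) < lam ^ 3)) (norm_nonneg (u (n+1))) hpK (hWp n)
      calc kwav k0 lam (n + 2) * (|a| * (k0 * lam ^ (n + 2)) * ‖u (n + 1)‖ * ‖v n‖)
          = kwav k0 lam (n + 2) * (|a| * (k0 * lam ^ (n + 2)) * ‖v n‖ * ‖u (n + 1)‖) := by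
            ring
        _ ≤ |a| * lam ^ 3 * W * ‖u (n + 1)‖ := h
  -- Term 4
  have A4 : kwav k0 lam m * ‖(b : ℂ) * (kz k0 lam (m : ℤ) : ℂ) * extz v (m : ℤ)
      * extz u ((m : ℤ) - 1)‖ ≤ |b| * lam * W * ‖extz u ((m : ℤ) - 1)‖ := by
    match m with
    | 0 =>
      rw [extz_nonpos' v ((0:ℕ) : ℤ) (by norm_num)]
      simp only [mul_zero, zero_mul, norm_zero]
      exact mul_nonneg (mul_nonneg (mul_nonneg (abs_nonneg b) (le_of_lt hlam0)) hW)
        (norm_nonneg _)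
    | 1 =>
      rw [show (((1:ℕ) : ℤ) - 1) = (0 : ℤ) by norm_num, extz_nonpos' u 0 le_rfl]
      simp only [mul_zero, norm_zero, zero_mul]
      exact le_rfl
    | (n+2) =>
      have N4 : ‖(b : ℂ) * (kz k0 lam ((n + 2 : ℕ) : ℤ) : ℂ) * extz v ((n + 2 : ℕ) : ℤ)
          * extz u (((n + 2 : ℕ) : ℤ) - 1)‖
          = |b| * (k0 * lam ^ (n + 2)) * ‖v (n + 1)‖ * ‖u n‖ := by
        rw [show (((n + 2 : ℕ)) : ℤ) - 1 = ((n : ℕ) : ℤ) + 1 by push_cast; ring, extz_coe',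
          show (((n + 2 : ℕ)) : ℤ) = (((n + 1 : ℕ)) : ℤ) + 1 by push_cast; ring, extz_coe',
          show ((((n + 1 : ℕ)) : ℤ) + 1) = (((n + 2 : ℕ)) : ℤ) by push_cast; ring, kz_coe']
        exact norm_term b _ (by positivity) _ _
      rw [N4, show (((n + 2 : ℕ)) : ℤ) - 1 = ((n : ℕ) : ℤ) + 1 by push_cast; ring, extz_coe']
      have hpK : kwav k0 lam (n + 2) * (k0 * lam ^ (n + 2)) = lam * kwav k0 lam (n + 1) ^ 2 := by
        simp only [kwav]; ring
      exact Abound (abs_nonneg b) (le_of_lt hlam0) (norm_nonneg (u n)) hpK (hWp (n + 1))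
  have hsplit : (|b| * (lam ^ 2)⁻¹ + |a| * lam ^ 3) * W * ‖extz u (m : ℤ)‖
      = |b| * (lam ^ 2)⁻¹ * W * ‖extz u (m : ℤ)‖ + |a| * lam ^ 3 * W * ‖extz u (m : ℤ)‖ := by
    ring
  linarith [hmul, A1, A2, A3, A4]

/-- for every `u ∈ H` and `v ∈ D(A)`, `B(u,v) ∈ V` and
`‖B(u,v)‖ ≤ C₃ |u| |Av|` with `C₃ = |a|(λ³ + λ⁻³) + |b|(λ + λ⁻²)`. -/
theorem sabra_nonlinear_H_DA_to_V
    (a b k0 lam : ℝ) (hk0 : 0 < k0) (hlam : 1 < lam)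
    (u v : ℕ → ℂ) (hu : memH u) (hv : memDA k0 lam v) :
    memV k0 lam (sabraB a b k0 lam u v) ∧
      Vnorm k0 lam (sabraB a b k0 lam u v) ≤
        (|a| * (lam ^ 3 + (lam ^ 3)⁻¹) + |b| * (lam + (lam ^ 2)⁻¹)) *
          Hnorm u * DAnorm k0 lam v := by
  have hlam0 : (0:ℝ) < lam := lt_trans one_pos hlam
  have hU0 : (0:ℝ) ≤ Hnorm u := Real.sqrt_nonneg _
  have hW0 : (0:ℝ) ≤ DAnorm k0 lam v := Real.sqrt_nonneg _
  have hUsq : ∑' n, ‖u n‖ ^ 2 = Hnorm u ^ 2 := by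
    rw [Hnorm, Real.sq_sqrt (tsum_nonneg fun n => by positivity)]
  have hWp : ∀ j, kwav k0 lam j ^ 2 * ‖v j‖ ≤ DAnorm k0 lam v := by
    intro j
    have h2 : kwav k0 lam j ^ 4 * ‖v j‖ ^ 2 ≤ ∑' n, kwav k0 lam n ^ 4 * ‖v n‖ ^ 2 :=
      Summable.le_tsum hv j fun k _ => by positivity
    have h3 : (kwav k0 lam j ^ 2 * ‖v j‖) ^ 2 = kwav k0 lam j ^ 4 * ‖v j‖ ^ 2 := by ring
    calc kwav k0 lam j ^ 2 * ‖v j‖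
        = Real.sqrt ((kwav k0 lam j ^ 2 * ‖v j‖) ^ 2) := (Real.sqrt_sq (by positivity)).symm
      _ ≤ Real.sqrt (∑' n, kwav k0 lam n ^ 4 * ‖v n‖ ^ 2) :=
          Real.sqrt_le_sqrt (by rw [h3]; exact h2)
      _ = DAnorm k0 lam v := rfl
  set W := DAnorm k0 lam v with hWdef
  set U := Hnorm u with hUdef
  -- sequence 1 : shift up by one
  have hshift1 : Summable (fun m => ‖u (m + 1)‖ ^ 2) :=
    (summable_nat_add_iff (f := fun n => ‖u n‖ ^ 2) 1).2 hu
  have hTshift1 : ∑' m, ‖u (m + 1)‖ ^ 2 ≤ U ^ 2 := by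
    rw [← hUsq]
    exact Summable.tsum_le_tsum_of_inj (fun n => n + 1) (add_left_injective 1)
      (fun c _ => by positivity) (fun n => le_rfl) hshift1 hu
  have hSf1 : Summable (fun m => (|a| * (lam ^ 3)⁻¹ * W * ‖u (m + 1)‖) ^ 2) := by
    have := hshift1.mul_left ((|a| * (lam ^ 3)⁻¹ * W) ^ 2)
    exact this.congr fun m => by ring
  have hTf1 : ∑' m, (|a| * (lam ^ 3)⁻¹ * W * ‖u (m + 1)‖) ^ 2
      ≤ (|a| * (lam ^ 3)⁻¹ * W * U) ^ 2 := by
    calc ∑' m, (|a| * (lam ^ 3)⁻¹ * W * ‖u (m + 1)‖) ^ 2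
        = ∑' m, (|a| * (lam ^ 3)⁻¹ * W) ^ 2 * ‖u (m + 1)‖ ^ 2 :=
          tsum_congr fun m => by ring
      _ = (|a| * (lam ^ 3)⁻¹ * W) ^ 2 * ∑' m, ‖u (m + 1)‖ ^ 2 := tsum_mul_left
      _ ≤ (|a| * (lam ^ 3)⁻¹ * W) ^ 2 * U ^ 2 :=
          mul_le_mul_of_nonneg_left hTshift1 (by positivity)
      _ = (|a| * (lam ^ 3)⁻¹ * W * U) ^ 2 := by ring
  -- sequence 2 : ‖extz u m‖
  have hg2succ : ∀ m : ℕ, ‖extz u ((m + 1 : ℕ) : ℤ)‖ ^ 2 = ‖u m‖ ^ 2 := fun m => by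
    rw [show ((m + 1 : ℕ) : ℤ) = (m : ℤ) + 1 by push_cast; ring, extz_coe']
  have hSg2 : Summable (fun m : ℕ => ‖extz u (m : ℤ)‖ ^ 2) :=
    (summable_nat_add_iff (f := fun m : ℕ => ‖extz u (m : ℤ)‖ ^ 2) 1).1
      ((summable_congr hg2succ).2 hu)
  have hTg2 : ∑' m : ℕ, ‖extz u (m : ℤ)‖ ^ 2 = U ^ 2 := by
    rw [Summable.tsum_eq_zero_add hSg2,
      show ‖extz u ((0:ℕ) : ℤ)‖ ^ 2 = 0 by rw [extz_nonpos' u _ (by norm_num)]; simp,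
      zero_add, ← hUsq]
    exact tsum_congr hg2succ
  have hSf2 : Summable (fun m : ℕ =>
      ((|b| * (lam ^ 2)⁻¹ + |a| * lam ^ 3) * W * ‖extz u (m : ℤ)‖) ^ 2) := by
    have := hSg2.mul_left (((|b| * (lam ^ 2)⁻¹ + |a| * lam ^ 3) * W) ^ 2)
    exact this.congr fun m => by ring
  have hTf2 : ∑' m : ℕ, ((|b| * (lam ^ 2)⁻¹ + |a| * lam ^ 3) * W * ‖extz u (m : ℤ)‖) ^ 2
      = ((|b| * (lam ^ 2)⁻¹ + |a| * lam ^ 3) * W * U) ^ 2 := by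
    calc ∑' m : ℕ, ((|b| * (lam ^ 2)⁻¹ + |a| * lam ^ 3) * W * ‖extz u (m : ℤ)‖) ^ 2
        = ∑' m : ℕ, ((|b| * (lam ^ 2)⁻¹ + |a| * lam ^ 3) * W) ^ 2 * ‖extz u (m : ℤ)‖ ^ 2 :=
          tsum_congr fun m => by ring
      _ = ((|b| * (lam ^ 2)⁻¹ + |a| * lam ^ 3) * W) ^ 2 * ∑' m : ℕ, ‖extz u (m : ℤ)‖ ^ 2 :=
          tsum_mul_left
      _ = ((|b| * (lam ^ 2)⁻¹ + |a| * lam ^ 3) * W * U) ^ 2 := by rw [hTg2]; ring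
  -- sequence 4 : ‖extz u (m - 1)‖
  have hg4succ : ∀ m : ℕ, ‖extz u (((m + 1 : ℕ) : ℤ) - 1)‖ ^ 2 = ‖extz u (m : ℤ)‖ ^ 2 :=
    fun m => by rw [show (((m + 1 : ℕ)) : ℤ) - 1 = (m : ℤ) by push_cast; ring]
  have hSg4 : Summable (fun m : ℕ => ‖extz u ((m : ℤ) - 1)‖ ^ 2) :=
    (summable_nat_add_iff (f := fun m : ℕ => ‖extz u ((m : ℤ) - 1)‖ ^ 2) 1).1
      ((summable_congr hg4succ).2 hSg2)
  have hTg4 : ∑' m : ℕ, ‖extz u ((m : ℤ) - 1)‖ ^ 2 ≤ U ^ 2 := by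
    rw [Summable.tsum_eq_zero_add hSg4,
      show ‖extz u (((0:ℕ) : ℤ) - 1)‖ ^ 2 = 0 by rw [extz_nonpos' u _ (by norm_num)]; simp,
      zero_add, tsum_congr hg4succ, hTg2]
  have hSf4 : Summable (fun m : ℕ => (|b| * lam * W * ‖extz u ((m : ℤ) - 1)‖) ^ 2) := by
    have := hSg4.mul_left ((|b| * lam * W) ^ 2)
    exact this.congr fun m => by ring
  have hTf4 : ∑' m : ℕ, (|b| * lam * W * ‖extz u ((m : ℤ) - 1)‖) ^ 2
      ≤ (|b| * lam * W * U) ^ 2 := by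
    calc ∑' m : ℕ, (|b| * lam * W * ‖extz u ((m : ℤ) - 1)‖) ^ 2
        = ∑' m : ℕ, (|b| * lam * W) ^ 2 * ‖extz u ((m : ℤ) - 1)‖ ^ 2 :=
          tsum_congr fun m => by ring
      _ = (|b| * lam * W) ^ 2 * ∑' m : ℕ, ‖extz u ((m : ℤ) - 1)‖ ^ 2 := tsum_mul_left
      _ ≤ (|b| * lam * W) ^ 2 * U ^ 2 := mul_le_mul_of_nonneg_left hTg4 (by positivity)
      _ = (|b| * lam * W * U) ^ 2 := by ring
  -- triangle inequality
  obtain ⟨hS24, hT24⟩ := l2tri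
    (fun m : ℕ => (|b| * (lam ^ 2)⁻¹ + |a| * lam ^ 3) * W * ‖extz u (m : ℤ)‖)
    (fun m : ℕ => |b| * lam * W * ‖extz u ((m : ℤ) - 1)‖) hSf2 hSf4
  obtain ⟨hStot, hTtot⟩ := l2tri
    (fun m : ℕ => |a| * (lam ^ 3)⁻¹ * W * ‖u (m + 1)‖)
    (fun m : ℕ => (|b| * (lam ^ 2)⁻¹ + |a| * lam ^ 3) * W * ‖extz u (m : ℤ)‖
      + |b| * lam * W * ‖extz u ((m : ℤ) - 1)‖) hSf1 hS24
  -- pointwise comparison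
  have key := key_pointwise a b k0 lam hk0 hlam0 u v W hW0 hWp
  have P : ∀ m, kwav k0 lam m ^ 2 * ‖sabraB a b k0 lam u v m‖ ^ 2 ≤
      (|a| * (lam ^ 3)⁻¹ * W * ‖u (m + 1)‖ +
        ((|b| * (lam ^ 2)⁻¹ + |a| * lam ^ 3) * W * ‖extz u (m : ℤ)‖
          + |b| * lam * W * ‖extz u ((m : ℤ) - 1)‖)) ^ 2 := by
    intro m
    have hknn : (0:ℝ) ≤ kwav k0 lam m :=
      le_of_lt (show (0:ℝ) < kwav k0 lam m from mul_pos hk0 (pow_pos hlam0 (m + 1)))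
    have h1 : kwav k0 lam m ^ 2 * ‖sabraB a b k0 lam u v m‖ ^ 2
        = (kwav k0 lam m * ‖sabraB a b k0 lam u v m‖) ^ 2 := by ring
    rw [h1]
    exact pow_le_pow_left₀ (by positivity) (key m) 2
  have hSB : Summable (fun m => kwav k0 lam m ^ 2 * ‖sabraB a b k0 lam u v m‖ ^ 2) :=
    Summable.of_nonneg_of_le (fun m => by positivity) P hStot
  refine ⟨hSB, ?_⟩
  have hfinal : Real.sqrt (∑' m, kwav k0 lam m ^ 2 * ‖sabraB a b k0 lam u v m‖ ^ 2)
      ≤ (|a| * (lam ^ 3)⁻¹ * W * U) + (((|b| * (lam ^ 2)⁻¹ + |a| * lam ^ 3) * W * U)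
        + (|b| * lam * W * U)) := by
    have step1 : Real.sqrt (∑' m, kwav k0 lam m ^ 2 * ‖sabraB a b k0 lam u v m‖ ^ 2)
        ≤ Real.sqrt (∑' m : ℕ, (|a| * (lam ^ 3)⁻¹ * W * ‖u (m + 1)‖ +
          ((|b| * (lam ^ 2)⁻¹ + |a| * lam ^ 3) * W * ‖extz u (m : ℤ)‖
            + |b| * lam * W * ‖extz u ((m : ℤ) - 1)‖)) ^ 2) :=
      Real.sqrt_le_sqrt (Summable.tsum_le_tsum P hSB hStot)
    have sq1 : Real.sqrt (∑' m, (|a| * (lam ^ 3)⁻¹ * W * ‖u (m + 1)‖) ^ 2)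
        ≤ |a| * (lam ^ 3)⁻¹ * W * U := by
      calc Real.sqrt (∑' m, (|a| * (lam ^ 3)⁻¹ * W * ‖u (m + 1)‖) ^ 2)
          ≤ Real.sqrt ((|a| * (lam ^ 3)⁻¹ * W * U) ^ 2) := Real.sqrt_le_sqrt hTf1
        _ = |a| * (lam ^ 3)⁻¹ * W * U := Real.sqrt_sq
            (by positivity)
    have sq2 : Real.sqrt (∑' m : ℕ,
        ((|b| * (lam ^ 2)⁻¹ + |a| * lam ^ 3) * W * ‖extz u (m : ℤ)‖) ^ 2)
        ≤ (|b| * (lam ^ 2)⁻¹ + |a| * lam ^ 3) * W * U := by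
      calc Real.sqrt (∑' m : ℕ,
            ((|b| * (lam ^ 2)⁻¹ + |a| * lam ^ 3) * W * ‖extz u (m : ℤ)‖) ^ 2)
          ≤ Real.sqrt (((|b| * (lam ^ 2)⁻¹ + |a| * lam ^ 3) * W * U) ^ 2) :=
            Real.sqrt_le_sqrt (le_of_eq hTf2)
        _ = (|b| * (lam ^ 2)⁻¹ + |a| * lam ^ 3) * W * U := Real.sqrt_sq (by positivity)
    have sq4 : Real.sqrt (∑' m : ℕ, (|b| * lam * W * ‖extz u ((m : ℤ) - 1)‖) ^ 2)
        ≤ |b| * lam * W * U := by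
      calc Real.sqrt (∑' m : ℕ, (|b| * lam * W * ‖extz u ((m : ℤ) - 1)‖) ^ 2)
          ≤ Real.sqrt ((|b| * lam * W * U) ^ 2) := Real.sqrt_le_sqrt hTf4
        _ = |b| * lam * W * U := Real.sqrt_sq (by positivity)
    calc Real.sqrt (∑' m, kwav k0 lam m ^ 2 * ‖sabraB a b k0 lam u v m‖ ^ 2)
        ≤ Real.sqrt (∑' m : ℕ, (|a| * (lam ^ 3)⁻¹ * W * ‖u (m + 1)‖ +
          ((|b| * (lam ^ 2)⁻¹ + |a| * lam ^ 3) * W * ‖extz u (m : ℤ)‖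
            + |b| * lam * W * ‖extz u ((m : ℤ) - 1)‖)) ^ 2) := step1
      _ ≤ Real.sqrt (∑' m, (|a| * (lam ^ 3)⁻¹ * W * ‖u (m + 1)‖) ^ 2)
          + Real.sqrt (∑' m : ℕ,
            ((|b| * (lam ^ 2)⁻¹ + |a| * lam ^ 3) * W * ‖extz u (m : ℤ)‖
              + |b| * lam * W * ‖extz u ((m : ℤ) - 1)‖) ^ 2) := hTtot
      _ ≤ Real.sqrt (∑' m, (|a| * (lam ^ 3)⁻¹ * W * ‖u (m + 1)‖) ^ 2)
          + (Real.sqrt (∑' m : ℕ,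
              ((|b| * (lam ^ 2)⁻¹ + |a| * lam ^ 3) * W * ‖extz u (m : ℤ)‖) ^ 2)
            + Real.sqrt (∑' m : ℕ, (|b| * lam * W * ‖extz u ((m : ℤ) - 1)‖) ^ 2)) := by
          linarith [hT24]
      _ ≤ _ := by linarith [sq1, sq2, sq4]
  calc Vnorm k0 lam (sabraB a b k0 lam u v)
      = Real.sqrt (∑' m, kwav k0 lam m ^ 2 * ‖sabraB a b k0 lam u v m‖ ^ 2) := rfl
    _ ≤ (|a| * (lam ^ 3)⁻¹ * W * U) + (((|b| * (lam ^ 2)⁻¹ + |a| * lam ^ 3) * W * U)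
        + (|b| * lam * W * U)) := hfinal
    _ = (|a| * (lam ^ 3 + (lam ^ 3)⁻¹) + |b| * (lam + (lam ^ 2)⁻¹)) * U * W := by ring

end Sabra
end
end

section
/- Let τ > 0 and 0 < p ≤ log_λ((1+√5)/2). For all u, v, w in the Gevrey class G^{p,1}_τ, one has |(A^{1/2} e^{τA^{p/2}} B(u,v), A^{1/2} e^{τA^{p/2}} w)| ≤ C₄ ‖u‖_{G^{p,1}_τ} ‖v‖_{G^{p,1}_τ} ‖w‖_{G^{p,1}_τ}, where C₄ = |a|(λ^{-2} + λ²) + |b|(1 + λ²). -/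
open scoped BigOperators
open MeasureTheory Filter Topology

noncomputable section

namespace Sabra

/-- Cauchy–Schwarz-type estimate for a triple product of nonnegative square-summable
sequences. -/
lemma tripleCS (f g h : ℕ → ℝ) (hf0 : ∀ n, 0 ≤ f n) (hg0 : ∀ n, 0 ≤ g n) (hh0 : ∀ n, 0 ≤ h n)
    (hf : Summable (fun n => f n ^ 2)) (hg : Summable (fun n => g n ^ 2))
    (hh : Summable (fun n => h n ^ 2)) :
    Summable (fun n => f n * g n * h n) ∧
      ∑' n, f n * g n * h n ≤
        Real.sqrt (∑' n, f n ^ 2) * Real.sqrt (∑' n, g n ^ 2) * Real.sqrt (∑' n, h n ^ 2) := by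
  set A := ∑' n, f n ^ 2 with hA
  set B := ∑' n, g n ^ 2 with hB
  set C := ∑' n, h n ^ 2 with hC
  have hA0 : 0 ≤ A := tsum_nonneg fun n => sq_nonneg _
  have hB0 : 0 ≤ B := tsum_nonneg fun n => sq_nonneg _
  have hC0 : 0 ≤ C := tsum_nonneg fun n => sq_nonneg _
  have hhb : ∀ n, h n ≤ Real.sqrt C := by
    intro n
    have h1 : h n ^ 2 ≤ C := Summable.le_tsum hh n (fun j _ => sq_nonneg _)
    nlinarith [Real.sq_sqrt hC0, Real.sqrt_nonneg C, hh0 n]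
  have hsum : Summable (fun n => f n * g n * h n) := by
    apply Summable.of_nonneg_of_le
      (fun n => mul_nonneg (mul_nonneg (hf0 n) (hg0 n)) (hh0 n))
      (fun n => ?_) (((hf.add hg).mul_left (Real.sqrt C)))
    have := hhb n
    nlinarith [hf0 n, hg0 n, hh0 n, sq_nonneg (f n - g n), Real.sqrt_nonneg C]
  refine ⟨hsum, Summable.tsum_le_of_sum_le hsum fun s => ?_⟩
  have h1 : (∑ i ∈ s, f i * (g i * h i)) ^ 2 ≤ (∑ i ∈ s, f i ^ 2) * ∑ i ∈ s, (g i * h i) ^ 2 :=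
    Finset.sum_mul_sq_le_sq_mul_sq s f (fun i => g i * h i)
  have h2 : ∑ i ∈ s, (g i * h i) ^ 2 ≤ C * ∑ i ∈ s, g i ^ 2 := by
    rw [Finset.mul_sum]
    apply Finset.sum_le_sum
    intro i _
    have := hhb i
    have hc2 : h i ^ 2 ≤ C := Summable.le_tsum hh i (fun j _ => sq_nonneg _)
    nlinarith [sq_nonneg (g i), hg0 i]
  have h3 : ∑ i ∈ s, f i ^ 2 ≤ A := Summable.sum_le_tsum s (fun i _ => sq_nonneg _) hf
  have h4 : ∑ i ∈ s, g i ^ 2 ≤ B := Summable.sum_le_tsum s (fun i _ => sq_nonneg _) hg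
  have h5 : (∑ i ∈ s, f i * (g i * h i)) ^ 2 ≤ A * (B * C) := by
    have hgh0 : (0:ℝ) ≤ ∑ i ∈ s, (g i * h i) ^ 2 := Finset.sum_nonneg fun i _ => sq_nonneg _
    have h2' : ∑ i ∈ s, (g i * h i) ^ 2 ≤ B * C := by
      calc ∑ i ∈ s, (g i * h i) ^ 2 ≤ C * ∑ i ∈ s, g i ^ 2 := h2
        _ ≤ C * B := mul_le_mul_of_nonneg_left h4 hC0
        _ = B * C := mul_comm _ _
    calc (∑ i ∈ s, f i * (g i * h i)) ^ 2 ≤ (∑ i ∈ s, f i ^ 2) * ∑ i ∈ s, (g i * h i) ^ 2 := h1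
      _ ≤ A * (B * C) := mul_le_mul h3 h2' hgh0 hA0
  have h6 : (0:ℝ) ≤ ∑ i ∈ s, f i * (g i * h i) :=
    Finset.sum_nonneg fun i _ => mul_nonneg (hf0 i) (mul_nonneg (hg0 i) (hh0 i))
  have h7 : ∑ i ∈ s, f i * (g i * h i) ≤ Real.sqrt (A * (B * C)) := by
    rw [show A * (B*C) = Real.sqrt (A*(B*C)) ^ 2 from
      (Real.sq_sqrt (by positivity)).symm] at h5
    nlinarith [Real.sqrt_nonneg (A*(B*C))]
  calc ∑ i ∈ s, f i * g i * h i = ∑ i ∈ s, f i * (g i * h i) := by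
        apply Finset.sum_congr rfl; intros; ring
    _ ≤ Real.sqrt (A * (B * C)) := h7
    _ = Real.sqrt A * Real.sqrt B * Real.sqrt C := by
        rw [Real.sqrt_mul hA0, Real.sqrt_mul hB0, mul_assoc]

/-- A tail-type comparison: the shifted sum of squares is at most the full sum. -/
lemma tsum_shift_le (f : ℕ → ℝ) (h0 : ∀ n, 0 ≤ f n) (hf : Summable f) :
    ∑' n, f (n + 1) ≤ ∑' n, f n := by
  have h := Summable.tsum_eq_zero_add hf
  have h2 : 0 ≤ f 0 := h0 0
  linarith [h.ge, h.le]

set_option maxHeartbeats 1000000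

/-- Gevrey estimate for the nonlinear term: for `τ > 0`,
`0 < p ≤ log_λ((1+√5)/2)` and `u, v, w ∈ G^{p,1}_τ`,
`|(A^{1/2} e^{τA^{p/2}} B(u,v), A^{1/2} e^{τA^{p/2}} w)| ≤ C₄ ‖u‖_{G^{p,1}_τ}
‖v‖_{G^{p,1}_τ} ‖w‖_{G^{p,1}_τ}` with `C₄ = |a|(λ⁻² + λ²) + |b|(1 + λ²)`. -/
theorem sabra_gevrey_nonlinear_estimate
    (a b k0 lam τ p : ℝ) (hk0 : 0 < k0) (hlam : 1 < lam) (hτ : 0 < τ) (hp : 0 < p)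
    (hple : p ≤ Real.logb lam ((1 + Real.sqrt 5) / 2))
    (u v w : ℕ → ℂ)
    (hu : memG k0 lam p 1 τ u) (hv : memG k0 lam p 1 τ v) (hw : memG k0 lam p 1 τ w) :
    ‖∑' n, (((kwav k0 lam n ^ 2 * Real.exp (2 * τ * kwav k0 lam n ^ p)) : ℝ) : ℂ) *
        sabraB a b k0 lam u v n * starRingEnd ℂ (w n)‖ ≤
      (|a| * ((lam ^ 2)⁻¹ + lam ^ 2) + |b| * (1 + lam ^ 2)) *
        Gnorm k0 lam p 1 τ u * Gnorm k0 lam p 1 τ v * Gnorm k0 lam p 1 τ w := by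
  unfold memG at hu hv hw
  have hlam0 : 0 < lam := lt_trans one_pos hlam
  set κ : ℕ → ℝ := kwav k0 lam with hκdef
  have hκ : ∀ n, 0 < κ n := by
    intro n; rw [hκdef]; unfold kwav; positivity
  have hκs : ∀ n, κ (n+1) = κ n * lam := by
    intro n; rw [hκdef]; unfold kwav; ring
  have hκmono : ∀ n, κ n ≤ κ (n+1) := by
    intro n; rw [hκs n]; nlinarith [hκ n]
  have hrmono : ∀ n, κ n ^ p ≤ κ (n+1) ^ p := fun n =>
    Real.rpow_le_rpow (hκ n).le (hκmono n) hp.le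
  have hgold : ∀ n, κ (n+2) ^ p ≤ κ (n+1) ^ p + κ n ^ p := by
    intro n
    set x := lam ^ p with hx
    have hx0 : 0 < x := Real.rpow_pos_of_pos hlam0 p
    have hs5 : Real.sqrt 5 ^ 2 = 5 := Real.sq_sqrt (by norm_num)
    have hs50 : 0 ≤ Real.sqrt 5 := Real.sqrt_nonneg 5
    have hφ : (0:ℝ) < (1 + Real.sqrt 5)/2 := by nlinarith
    have hxφ : x ≤ (1 + Real.sqrt 5)/2 := by
      calc x ≤ lam ^ Real.logb lam ((1 + Real.sqrt 5)/2) :=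
            Real.rpow_le_rpow_of_exponent_le hlam.le hple
        _ = (1 + Real.sqrt 5)/2 := Real.rpow_logb hlam0 (ne_of_gt hlam) hφ
    have hx2 : x ^ 2 ≤ x + 1 := by
      nlinarith [mul_nonneg (sub_nonneg.2 hxφ)
        (show (0:ℝ) ≤ x - (1 - Real.sqrt 5)/2 by nlinarith)]
    have h2 : κ (n+2) = κ n * (lam * lam) := by rw [hκs (n+1), hκs n]; ring
    have e1 : κ (n+1) ^ p = κ n ^ p * x := by
      rw [hκs n, Real.mul_rpow (hκ n).le hlam0.le]
    have e2 : κ (n+2) ^ p = κ n ^ p * (x * x) := by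
      rw [h2, Real.mul_rpow (hκ n).le (by positivity), Real.mul_rpow hlam0.le hlam0.le]
    have hκp : 0 < κ n ^ p := Real.rpow_pos_of_pos (hκ n) p
    rw [e1, e2]; nlinarith
  set E : ℕ → ℝ := fun n => Real.exp (τ * κ n ^ p) with hEdef
  have hE0 : ∀ n, 0 < E n := fun n => Real.exp_pos _
  have hE1 : ∀ n, 1 ≤ E n := by
    intro n
    rw [hEdef]
    exact Real.one_le_exp (mul_nonneg hτ.le (Real.rpow_nonneg (hκ n).le p))
  have hEmono : ∀ n, E n ≤ E (n+1) := by
    intro n; rw [hEdef]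
    exact Real.exp_le_exp.2 (mul_le_mul_of_nonneg_left (hrmono n) hτ.le)
  have hEE1 : ∀ n, E n ≤ E (n+1) * E (n+2) := by
    intro n
    calc E n ≤ E (n+1) := hEmono n
      _ = E (n+1) * 1 := (mul_one _).symm
      _ ≤ E (n+1) * E (n+2) := mul_le_mul_of_nonneg_left (hE1 _) (hE0 _).le
  have hEE2 : ∀ n, E (n+1) ≤ E n * E (n+2) := by
    intro n
    calc E (n+1) ≤ E (n+2) := hEmono _
      _ = 1 * E (n+2) := (one_mul _).symm
      _ ≤ E n * E (n+2) := mul_le_mul_of_nonneg_right (hE1 n) (hE0 _).le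
  have hEE3 : ∀ n, E (n+2) ≤ E (n+1) * E n := by
    intro n
    rw [hEdef]
    dsimp only
    rw [← Real.exp_add]
    apply Real.exp_le_exp.2
    nlinarith [mul_le_mul_of_nonneg_left (hgold n) hτ.le]
  set fa : ℕ → ℝ := fun n => E n * κ n * ‖u n‖ with hfa
  set fb : ℕ → ℝ := fun n => E n * κ n * ‖v n‖ with hfb
  set fc : ℕ → ℝ := fun n => E n * κ n * ‖w n‖ with hfc
  have hfav : ∀ n, fa n = E n * κ n * ‖u n‖ := fun n => rfl
  have hfbv : ∀ n, fb n = E n * κ n * ‖v n‖ := fun n => rfl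
  have hfcv : ∀ n, fc n = E n * κ n * ‖w n‖ := fun n => rfl
  have hfa0 : ∀ n, 0 ≤ fa n := fun n =>
    mul_nonneg (mul_nonneg (hE0 n).le (hκ n).le) (norm_nonneg _)
  have hfb0 : ∀ n, 0 ≤ fb n := fun n =>
    mul_nonneg (mul_nonneg (hE0 n).le (hκ n).le) (norm_nonneg _)
  have hfc0 : ∀ n, 0 ≤ fc n := fun n =>
    mul_nonneg (mul_nonneg (hE0 n).le (hκ n).le) (norm_nonneg _)
  have hsq : ∀ (z : ℕ → ℂ) (n : ℕ),
      Real.exp (2 * τ * κ n ^ p) * κ n ^ (2 * (1:ℝ)) * ‖z n‖ ^ 2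
        = (E n * κ n * ‖z n‖) ^ 2 := by
    intro z n
    have h1 : Real.exp (2 * τ * κ n ^ p) = E n ^ 2 := by
      rw [hEdef]
      dsimp only
      rw [show 2 * τ * κ n ^ p = τ * κ n ^ p + τ * κ n ^ p by ring, Real.exp_add]
      ring
    have h2 : κ n ^ (2 * (1:ℝ)) = κ n ^ (2:ℕ) := by
      rw [show (2 * (1:ℝ)) = ((2:ℕ):ℝ) by norm_num, Real.rpow_natCast]
    rw [h1, h2]; ring
  have hsa : Summable (fun n => fa n ^ 2) := (summable_congr (fun n => hsq u n)).1 hu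
  have hsb : Summable (fun n => fb n ^ 2) := (summable_congr (fun n => hsq v n)).1 hv
  have hsc : Summable (fun n => fc n ^ 2) := (summable_congr (fun n => hsq w n)).1 hw
  set SA := ∑' n, fa n ^ 2 with hSA
  set SB := ∑' n, fb n ^ 2 with hSB
  set SC := ∑' n, fc n ^ 2 with hSC
  have hGu : Gnorm k0 lam p 1 τ u = Real.sqrt SA := by
    unfold Gnorm
    rw [hSA, ← hκdef]
    congr 1
    exact tsum_congr (fun n => hsq u n)
  have hGv : Gnorm k0 lam p 1 τ v = Real.sqrt SB := by
    unfold Gnorm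
    rw [hSB, ← hκdef]
    congr 1
    exact tsum_congr (fun n => hsq v n)
  have hGw : Gnorm k0 lam p 1 τ w = Real.sqrt SC := by
    unfold Gnorm
    rw [hSC, ← hκdef]
    congr 1
    exact tsum_congr (fun n => hsq w n)
  -- shifted square sums
  have hsa1 : Summable (fun n => fa (n+1) ^ 2) := (summable_nat_add_iff 1).2 hsa
  have hsb1 : Summable (fun n => fb (n+1) ^ 2) := (summable_nat_add_iff 1).2 hsb
  have hsb2 : Summable (fun n => fb (n+2) ^ 2) := (summable_nat_add_iff 2).2 hsb
  have hta1 : ∑' n, fa (n+1) ^ 2 ≤ SA :=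
    tsum_shift_le (fun n => fa n ^ 2) (fun n => sq_nonneg _) hsa
  have htb1 : ∑' n, fb (n+1) ^ 2 ≤ SB :=
    tsum_shift_le (fun n => fb n ^ 2) (fun n => sq_nonneg _) hsb
  have htb2 : ∑' n, fb (n+2) ^ 2 ≤ SB := by
    have h1 : ∑' n, fb (n+1+1) ^ 2 ≤ ∑' n, fb (n+1) ^ 2 :=
      tsum_shift_le (fun n => fb (n+1) ^ 2) (fun n => sq_nonneg _) hsb1
    exact le_trans h1 htb1
  set A1 : ℕ → ℝ := fun m => if m = 0 then 0 else fa (m-1) with hA1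
  set A2 : ℕ → ℝ := fun m => if m ≤ 1 then 0 else fa (m-2) with hA2
  set B1 : ℕ → ℝ := fun m => if m = 0 then 0 else fb (m-1) with hB1
  set B2 : ℕ → ℝ := fun m => if m ≤ 1 then 0 else fb (m-2) with hB2
  have hA1succ : ∀ n, A1 (n+1) = fa n := by intro n; simp [hA1]
  have hB1succ : ∀ n, B1 (n+1) = fb n := by intro n; simp [hB1]
  have hA2succ : ∀ n, A2 (n+1) = A1 n := by
    intro n
    match n with
    | 0 => simp [hA1, hA2]
    | (j+1) => simp [hA1, hA2]
  have hB2succ : ∀ n, B2 (n+1) = B1 n := by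
    intro n
    match n with
    | 0 => simp [hB1, hB2]
    | (j+1) => simp [hB1, hB2]
  have hA1z : A1 0 = 0 := by simp [hA1]
  have hA2z : A2 0 = 0 := by simp [hA2]
  have hB1z : B1 0 = 0 := by simp [hB1]
  have hB2z : B2 0 = 0 := by simp [hB2]
  have hA10 : ∀ n, 0 ≤ A1 n := by
    intro n; rw [hA1]; dsimp only; split
    · exact le_rfl
    · exact hfa0 _
  have hA20 : ∀ n, 0 ≤ A2 n := by
    intro n; rw [hA2]; dsimp only; split
    · exact le_rfl
    · exact hfa0 _
  have hB10 : ∀ n, 0 ≤ B1 n := by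
    intro n; rw [hB1]; dsimp only; split
    · exact le_rfl
    · exact hfb0 _
  have hB20 : ∀ n, 0 ≤ B2 n := by
    intro n; rw [hB2]; dsimp only; split
    · exact le_rfl
    · exact hfb0 _
  have hsA1 : Summable (fun m => A1 m ^ 2) :=
    (summable_nat_add_iff 1).1 ((summable_congr (fun n => by rw [hA1succ n])).2 hsa)
  have hsB1 : Summable (fun m => B1 m ^ 2) :=
    (summable_nat_add_iff 1).1 ((summable_congr (fun n => by rw [hB1succ n])).2 hsb)
  have hsA2 : Summable (fun m => A2 m ^ 2) :=
    (summable_nat_add_iff 1).1 ((summable_congr (fun n => by rw [hA2succ n])).2 hsA1)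
  have hsB2 : Summable (fun m => B2 m ^ 2) :=
    (summable_nat_add_iff 1).1 ((summable_congr (fun n => by rw [hB2succ n])).2 hsB1)
  have htA1 : ∑' m, A1 m ^ 2 ≤ SA := by
    have h := Summable.tsum_eq_zero_add hsA1
    have h2 : ∑' n, A1 (n+1) ^ 2 = SA := tsum_congr (fun n => by rw [hA1succ n])
    rw [h2, hA1z] at h
    simpa using h.le
  have htB1 : ∑' m, B1 m ^ 2 ≤ SB := by
    have h := Summable.tsum_eq_zero_add hsB1
    have h2 : ∑' n, B1 (n+1) ^ 2 = SB := tsum_congr (fun n => by rw [hB1succ n])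
    rw [h2, hB1z] at h
    simpa using h.le
  have htA2 : ∑' m, A2 m ^ 2 ≤ SA := by
    have h := Summable.tsum_eq_zero_add hsA2
    have h2 : ∑' n, A2 (n+1) ^ 2 = ∑' m, A1 m ^ 2 := tsum_congr (fun n => by rw [hA2succ n])
    rw [h2, hA2z] at h
    simp only [ne_eq, OfNat.ofNat_ne_zero, not_false_eq_true, zero_pow, zero_add] at h
    rw [h]; exact htA1
  have htB2 : ∑' m, B2 m ^ 2 ≤ SB := by
    have h := Summable.tsum_eq_zero_add hsB2
    have h2 : ∑' n, B2 (n+1) ^ 2 = ∑' m, B1 m ^ 2 := tsum_congr (fun n => by rw [hB2succ n])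
    rw [h2, hB2z] at h
    simp only [ne_eq, OfNat.ofNat_ne_zero, not_false_eq_true, zero_pow, zero_add] at h
    rw [h]; exact htB1
  -- extz and kz computation lemmas
  have hext1 : ∀ (z : ℕ → ℂ) (j : ℕ), extz z ((j:ℤ) + 1) = z j := by
    intro z j
    unfold extz
    rw [if_pos (by omega), show ((j:ℤ)+1).toNat - 1 = j by omega]
  have hext0 : ∀ (z : ℕ → ℂ), extz z 0 = 0 := by
    intro z; unfold extz; rw [if_neg (by omega)]
  have hkz1 : ∀ j : ℕ, kz k0 lam ((j:ℤ) + 1) = κ j := by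
    intro j
    rw [hκdef]; unfold kz kwav
    rw [show ((j:ℤ) + 1) = ((j+1:ℕ):ℤ) by push_cast; ring, zpow_natCast]
  have hkzpos : ∀ j : ℤ, 0 < kz k0 lam j := by
    intro j; unfold kz; positivity
  -- coefficient inequalities
  have hw1 : ∀ m, E m ^ 2 * κ m ^ 2 * κ (m+1)
      ≤ (lam ^ 2)⁻¹ * (E (m+1) * κ (m+1) * (E (m+2) * κ (m+2) * (E m * κ m))) := by
    intro m
    have h1 : κ (m+1) = κ m * lam := hκs m
    have h2 : κ (m+2) = κ m * (lam * lam) := by rw [hκs (m+1), hκs m]; ring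
    rw [h1, h2]
    have key := mul_le_mul_of_nonneg_right (hEE1 m)
      (le_of_lt (mul_pos (hE0 m)
        (mul_pos (mul_pos (mul_pos (hκ m) (hκ m)) (hκ m)) hlam0)))
    have hlamne : lam ≠ 0 := ne_of_gt hlam0
    calc E m ^ 2 * κ m ^ 2 * (κ m * lam)
        = E m * (E m * (κ m * κ m * κ m * lam)) := by ring
      _ ≤ E (m+1) * E (m+2) * (E m * (κ m * κ m * κ m * lam)) := key
      _ = (lam ^ 2)⁻¹ * (E (m+1) * (κ m * lam) * (E (m+2) * (κ m * (lam * lam)) * (E m * κ m))) := by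
          field_simp
  have hw2 : ∀ j, E (j+1) ^ 2 * κ (j+1) ^ 2 * κ (j+1)
      ≤ E j * κ j * (E (j+2) * κ (j+2) * (E (j+1) * κ (j+1))) := by
    intro j
    have h1 : κ (j+1) = κ j * lam := hκs j
    have h2 : κ (j+2) = κ j * (lam * lam) := by rw [hκs (j+1), hκs j]; ring
    rw [h1, h2]
    have key := mul_le_mul_of_nonneg_right (hEE2 j)
      (le_of_lt (mul_pos (hE0 (j+1))
        (mul_pos (mul_pos (mul_pos (hκ j) (hκ j)) (hκ j))
          (mul_pos (mul_pos hlam0 hlam0) hlam0))))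
    calc E (j+1) ^ 2 * (κ j * lam) ^ 2 * (κ j * lam)
        = E (j+1) * (E (j+1) * (κ j * κ j * κ j * (lam * lam * lam))) := by ring
      _ ≤ E j * E (j+2) * (E (j+1) * (κ j * κ j * κ j * (lam * lam * lam))) := key
      _ = E j * κ j * (E (j+2) * (κ j * (lam * lam)) * (E (j+1) * (κ j * lam))) := by ring
  have hw34 : ∀ j, E (j+2) ^ 2 * κ (j+2) ^ 2 * κ (j+1)
      ≤ lam ^ 2 * (E (j+1) * κ (j+1) * (E j * κ j * (E (j+2) * κ (j+2)))) := by
    intro j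
    have h1 : κ (j+1) = κ j * lam := hκs j
    have h2 : κ (j+2) = κ j * (lam * lam) := by rw [hκs (j+1), hκs j]; ring
    rw [h1, h2]
    have key := mul_le_mul_of_nonneg_right (hEE3 j)
      (le_of_lt (mul_pos (hE0 (j+2))
        (mul_pos (mul_pos (mul_pos (hκ j) (hκ j)) (hκ j))
          (mul_pos (mul_pos (mul_pos (mul_pos hlam0 hlam0) hlam0) hlam0) hlam0))))
    calc E (j+2) ^ 2 * (κ j * (lam * lam)) ^ 2 * (κ j * lam)
        = E (j+2) * (E (j+2) * (κ j * κ j * κ j * (lam * lam * lam * lam * lam))) := by ring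
      _ ≤ E (j+1) * E j * (E (j+2) * (κ j * κ j * κ j * (lam * lam * lam * lam * lam))) := key
      _ = lam ^ 2 * (E (j+1) * (κ j * lam) * (E j * κ j * (E (j+2) * (κ j * (lam * lam))))) := by
          ring
  -- norm bound on the bilinear term
  have hBnorm : ∀ m : ℕ, ‖sabraB a b k0 lam u v m‖ ≤
      |a| * κ (m+1) * (‖extz v ((m:ℤ)+3)‖ * ‖extz u ((m:ℤ)+2)‖)
      + |b| * κ m * (‖extz v ((m:ℤ)+2)‖ * ‖extz u (m:ℤ)‖)
      + |a| * kz k0 lam (m:ℤ) * (‖extz u (m:ℤ)‖ * ‖extz v ((m:ℤ)-1)‖)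
      + |b| * kz k0 lam (m:ℤ) * (‖extz v (m:ℤ)‖ * ‖extz u ((m:ℤ)-1)‖) := by
    intro m
    have hkz2 : kz k0 lam ((m:ℤ)+2) = κ (m+1) := by
      rw [show (m:ℤ)+2 = ((m+1:ℕ):ℤ)+1 by push_cast; ring]; exact hkz1 (m+1)
    have hkz1' : kz k0 lam ((m:ℤ)+1) = κ m := hkz1 m
    unfold sabraB
    rw [norm_mul]
    have hI : ‖-Complex.I‖ = 1 := by simp
    rw [hI, one_mul]
    refine le_trans (norm_add_le _ _) ?_
    refine le_trans (add_le_add (norm_add_le _ _) le_rfl) ?_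
    refine le_trans (add_le_add (add_le_add (norm_add_le _ _) le_rfl) le_rfl) ?_
    apply add_le_add (add_le_add (add_le_add ?_ ?_) ?_) ?_
    · apply le_of_eq
      rw [norm_mul, norm_mul, norm_mul, Complex.norm_real, Real.norm_eq_abs,
        Complex.norm_real, Real.norm_eq_abs, abs_of_pos (hkzpos _), hkz2,
        RCLike.norm_conj]
      ring
    · apply le_of_eq
      rw [norm_mul, norm_mul, norm_mul, Complex.norm_real, Real.norm_eq_abs,
        Complex.norm_real, Real.norm_eq_abs, abs_of_pos (hkzpos _), hkz1',
        RCLike.norm_conj]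
      ring
    · apply le_of_eq
      rw [norm_mul, norm_mul, norm_mul, Complex.norm_real, Real.norm_eq_abs,
        Complex.norm_real, Real.norm_eq_abs, abs_of_pos (hkzpos _)]
      ring
    · apply le_of_eq
      rw [norm_mul, norm_mul, norm_mul, Complex.norm_real, Real.norm_eq_abs,
        Complex.norm_real, Real.norm_eq_abs, abs_of_pos (hkzpos _)]
      ring
  -- nonnegativity of the four target terms
  have hT10 : ∀ m, (0:ℝ) ≤ |a| * (lam ^ 2)⁻¹ * (fa (m+1) * fb (m+2) * fc m) := fun m =>
    mul_nonneg (mul_nonneg (abs_nonneg a) (inv_nonneg.2 (sq_nonneg lam)))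
      (mul_nonneg (mul_nonneg (hfa0 _) (hfb0 _)) (hfc0 _))
  have hT20 : ∀ m, (0:ℝ) ≤ |b| * (A1 m * fb (m+1) * fc m) := fun m =>
    mul_nonneg (abs_nonneg b)
      (mul_nonneg (mul_nonneg (hA10 m) (hfb0 _)) (hfc0 m))
  have hT30 : ∀ m, (0:ℝ) ≤ |a| * lam ^ 2 * (A1 m * B2 m * fc m) := fun m =>
    mul_nonneg (mul_nonneg (abs_nonneg a) (sq_nonneg lam))
      (mul_nonneg (mul_nonneg (hA10 m) (hB20 m)) (hfc0 m))
  have hT40 : ∀ m, (0:ℝ) ≤ |b| * lam ^ 2 * (A2 m * B1 m * fc m) := fun m =>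
    mul_nonneg (mul_nonneg (abs_nonneg b) (sq_nonneg lam))
      (mul_nonneg (mul_nonneg (hA20 m) (hB10 m)) (hfc0 m))
  -- the pointwise bound
  have hpt : ∀ m : ℕ,
      ‖(((κ m ^ 2 * Real.exp (2 * τ * κ m ^ p)) : ℝ) : ℂ) * sabraB a b k0 lam u v m *
          starRingEnd ℂ (w m)‖ ≤
        |a| * (lam ^ 2)⁻¹ * (fa (m+1) * fb (m+2) * fc m)
        + |b| * (A1 m * fb (m+1) * fc m)
        + |a| * lam ^ 2 * (A1 m * B2 m * fc m)
        + |b| * lam ^ 2 * (A2 m * B1 m * fc m) := by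
    intro m
    have hcoef : ‖(((κ m ^ 2 * Real.exp (2 * τ * κ m ^ p)) : ℝ) : ℂ)‖
        = E m ^ 2 * κ m ^ 2 := by
      rw [Complex.norm_real, Real.norm_eq_abs, abs_of_nonneg (by positivity)]
      have h1 : Real.exp (2 * τ * κ m ^ p) = E m ^ 2 := by
        rw [hEdef]
        dsimp only
        rw [show 2 * τ * κ m ^ p = τ * κ m ^ p + τ * κ m ^ p by ring, Real.exp_add]
        ring
      rw [h1]; ring
    rw [norm_mul, norm_mul, hcoef, RCLike.norm_conj]
    have hcoef0 : 0 ≤ E m ^ 2 * κ m ^ 2 := by positivity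
    have step := mul_le_mul_of_nonneg_right
      (mul_le_mul_of_nonneg_left (hBnorm m) hcoef0) (norm_nonneg (w m))
    refine le_trans step ?_
    rw [mul_add, mul_add, mul_add, add_mul, add_mul, add_mul]
    apply add_le_add (add_le_add (add_le_add ?_ ?_) ?_) ?_
    · -- term 1, all m
      have hev3 : extz v ((m:ℤ)+3) = v (m+2) := by
        rw [show (m:ℤ)+3 = ((m+2:ℕ):ℤ)+1 by push_cast; ring]; exact hext1 v (m+2)
      have heu2 : extz u ((m:ℤ)+2) = u (m+1) := by
        rw [show (m:ℤ)+2 = ((m+1:ℕ):ℤ)+1 by push_cast; ring]; exact hext1 u (m+1)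
      rw [hev3, heu2]
      calc E m ^ 2 * κ m ^ 2 * (|a| * κ (m+1) * (‖v (m+2)‖ * ‖u (m+1)‖)) * ‖w m‖
          = E m ^ 2 * κ m ^ 2 * κ (m+1) * (|a| * (‖v (m+2)‖ * ‖u (m+1)‖ * ‖w m‖)) := by ring
        _ ≤ (lam ^ 2)⁻¹ * (E (m+1) * κ (m+1) * (E (m+2) * κ (m+2) * (E m * κ m)))
              * (|a| * (‖v (m+2)‖ * ‖u (m+1)‖ * ‖w m‖)) := by
            apply mul_le_mul_of_nonneg_right (hw1 m)
            positivity
        _ = |a| * (lam ^ 2)⁻¹ * (fa (m+1) * fb (m+2) * fc m) := by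
            rw [hfav, hfbv, hfcv]; ring
    · -- term 2
      match m with
      | 0 =>
        have h0 : extz u ((0:ℕ):ℤ) = 0 := by
          rw [show ((0:ℕ):ℤ) = 0 by norm_num]; exact hext0 u
        rw [h0]
        simpa using hT20 0
      | (j+1) =>
        have heu : extz u (((j+1:ℕ)):ℤ) = u j := by
          rw [show (((j+1:ℕ)):ℤ) = ((j:ℕ):ℤ)+1 by push_cast; ring]; exact hext1 u j
        have hev : extz v ((((j+1:ℕ)):ℤ)+2) = v (j+2) := by
          rw [show (((j+1:ℕ)):ℤ)+2 = ((j+2:ℕ):ℤ)+1 by push_cast; ring]; exact hext1 v (j+2)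
        rw [heu, hev, hA1succ]
        calc E (j+1) ^ 2 * κ (j+1) ^ 2 * (|b| * κ (j+1) * (‖v (j+2)‖ * ‖u j‖)) * ‖w (j+1)‖
            = E (j+1) ^ 2 * κ (j+1) ^ 2 * κ (j+1)
                * (|b| * (‖u j‖ * ‖v (j+2)‖ * ‖w (j+1)‖)) := by ring
          _ ≤ E j * κ j * (E (j+2) * κ (j+2) * (E (j+1) * κ (j+1)))
                * (|b| * (‖u j‖ * ‖v (j+2)‖ * ‖w (j+1)‖)) := by
              apply mul_le_mul_of_nonneg_right (hw2 j)
              positivity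
          _ = |b| * (fa j * fb (j+2) * fc (j+1)) := by
              rw [hfav, hfbv, hfcv]; ring
    · -- term 3
      match m with
      | 0 =>
        have h0 : extz u ((0:ℕ):ℤ) = 0 := by
          rw [show ((0:ℕ):ℤ) = 0 by norm_num]; exact hext0 u
        rw [h0]
        simpa using hT30 0
      | 1 =>
        have h0 : extz v (((1:ℕ):ℤ)-1) = 0 := by
          rw [show ((1:ℕ):ℤ)-1 = 0 by norm_num]; exact hext0 v
        rw [h0]
        simpa using hT30 1
      | (j+2) =>
        have hkzj : kz k0 lam ((j+2:ℕ):ℤ) = κ (j+1) := by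
          rw [show ((j+2:ℕ):ℤ) = ((j+1:ℕ):ℤ)+1 by push_cast; ring]; exact hkz1 (j+1)
        have heu : extz u ((j+2:ℕ):ℤ) = u (j+1) := by
          rw [show ((j+2:ℕ):ℤ) = ((j+1:ℕ):ℤ)+1 by push_cast; ring]; exact hext1 u (j+1)
        have hev : extz v (((j+2:ℕ):ℤ)-1) = v j := by
          rw [show ((j+2:ℕ):ℤ)-1 = ((j:ℕ):ℤ)+1 by push_cast; ring]; exact hext1 v j
        have hA1v : A1 (j+2) = fa (j+1) := hA1succ (j+1)
        have hB2v : B2 (j+2) = fb j := by rw [hB2succ (j+1), hB1succ j]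
        rw [hkzj, heu, hev, hA1v, hB2v]
        calc E (j+2) ^ 2 * κ (j+2) ^ 2 * (|a| * κ (j+1) * (‖u (j+1)‖ * ‖v j‖)) * ‖w (j+2)‖
            = E (j+2) ^ 2 * κ (j+2) ^ 2 * κ (j+1)
                * (|a| * (‖u (j+1)‖ * ‖v j‖ * ‖w (j+2)‖)) := by ring
          _ ≤ lam ^ 2 * (E (j+1) * κ (j+1) * (E j * κ j * (E (j+2) * κ (j+2))))
                * (|a| * (‖u (j+1)‖ * ‖v j‖ * ‖w (j+2)‖)) := by
              apply mul_le_mul_of_nonneg_right (hw34 j)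
              positivity
          _ = |a| * lam ^ 2 * (fa (j+1) * fb j * fc (j+2)) := by
              rw [hfav, hfbv, hfcv]; ring
    · -- term 4
      match m with
      | 0 =>
        have h0 : extz v ((0:ℕ):ℤ) = 0 := by
          rw [show ((0:ℕ):ℤ) = 0 by norm_num]; exact hext0 v
        rw [h0]
        simpa using hT40 0
      | 1 =>
        have h0 : extz u (((1:ℕ):ℤ)-1) = 0 := by
          rw [show ((1:ℕ):ℤ)-1 = 0 by norm_num]; exact hext0 u
        rw [h0]
        simpa using hT40 1
      | (j+2) =>
        have hkzj : kz k0 lam ((j+2:ℕ):ℤ) = κ (j+1) := by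
          rw [show ((j+2:ℕ):ℤ) = ((j+1:ℕ):ℤ)+1 by push_cast; ring]; exact hkz1 (j+1)
        have hev : extz v ((j+2:ℕ):ℤ) = v (j+1) := by
          rw [show ((j+2:ℕ):ℤ) = ((j+1:ℕ):ℤ)+1 by push_cast; ring]; exact hext1 v (j+1)
        have heu : extz u (((j+2:ℕ):ℤ)-1) = u j := by
          rw [show ((j+2:ℕ):ℤ)-1 = ((j:ℕ):ℤ)+1 by push_cast; ring]; exact hext1 u j
        have hB1v : B1 (j+2) = fb (j+1) := hB1succ (j+1)
        have hA2v : A2 (j+2) = fa j := by rw [hA2succ (j+1), hA1succ j]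
        rw [hkzj, heu, hev, hB1v, hA2v]
        calc E (j+2) ^ 2 * κ (j+2) ^ 2 * (|b| * κ (j+1) * (‖v (j+1)‖ * ‖u j‖)) * ‖w (j+2)‖
            = E (j+2) ^ 2 * κ (j+2) ^ 2 * κ (j+1)
                * (|b| * (‖v (j+1)‖ * ‖u j‖ * ‖w (j+2)‖)) := by ring
          _ ≤ lam ^ 2 * (E (j+1) * κ (j+1) * (E j * κ j * (E (j+2) * κ (j+2))))
                * (|b| * (‖v (j+1)‖ * ‖u j‖ * ‖w (j+2)‖)) := by
              apply mul_le_mul_of_nonneg_right (hw34 j)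
              positivity
          _ = |b| * lam ^ 2 * (fa j * fb (j+1) * fc (j+2)) := by
              rw [hfav, hfbv, hfcv]; ring
  -- triple Cauchy-Schwarz for the four series
  have hP1 := tripleCS (fun m => fa (m+1)) (fun m => fb (m+2)) fc
    (fun m => hfa0 _) (fun m => hfb0 _) hfc0 hsa1 hsb2 hsc
  have hP2 := tripleCS A1 (fun m => fb (m+1)) fc hA10 (fun m => hfb0 _) hfc0 hsA1 hsb1 hsc
  have hP3 := tripleCS A1 B2 fc hA10 hB20 hfc0 hsA1 hsB2 hsc
  have hP4 := tripleCS A2 B1 fc hA20 hB10 hfc0 hsA2 hsB1 hsc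
  have hprod : ∀ sa sb sc : ℝ, sa ≤ SA → sb ≤ SB → sc ≤ SC →
      Real.sqrt sa * Real.sqrt sb * Real.sqrt sc
        ≤ Real.sqrt SA * Real.sqrt SB * Real.sqrt SC := by
    intro sa sb sc h1 h2 h3
    apply mul_le_mul
      (mul_le_mul (Real.sqrt_le_sqrt h1) (Real.sqrt_le_sqrt h2)
        (Real.sqrt_nonneg _) (Real.sqrt_nonneg _))
      (Real.sqrt_le_sqrt h3) (Real.sqrt_nonneg _)
      (mul_nonneg (Real.sqrt_nonneg _) (Real.sqrt_nonneg _))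
  have hQ1 : ∑' m, fa (m+1) * fb (m+2) * fc m
      ≤ Real.sqrt SA * Real.sqrt SB * Real.sqrt SC :=
    le_trans hP1.2 (hprod _ _ _ hta1 htb2 le_rfl)
  have hQ2 : ∑' m, A1 m * fb (m+1) * fc m
      ≤ Real.sqrt SA * Real.sqrt SB * Real.sqrt SC :=
    le_trans hP2.2 (hprod _ _ _ htA1 htb1 le_rfl)
  have hQ3 : ∑' m, A1 m * B2 m * fc m
      ≤ Real.sqrt SA * Real.sqrt SB * Real.sqrt SC :=
    le_trans hP3.2 (hprod _ _ _ htA1 htB2 le_rfl)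
  have hQ4 : ∑' m, A2 m * B1 m * fc m
      ≤ Real.sqrt SA * Real.sqrt SB * Real.sqrt SC :=
    le_trans hP4.2 (hprod _ _ _ htA2 htB1 le_rfl)
  have hS1 : Summable (fun m => |a| * (lam ^ 2)⁻¹ * (fa (m+1) * fb (m+2) * fc m)) :=
    hP1.1.mul_left _
  have hS2 : Summable (fun m => |b| * (A1 m * fb (m+1) * fc m)) := hP2.1.mul_left _
  have hS3 : Summable (fun m => |a| * lam ^ 2 * (A1 m * B2 m * fc m)) := hP3.1.mul_left _
  have hS4 : Summable (fun m => |b| * lam ^ 2 * (A2 m * B1 m * fc m)) := hP4.1.mul_left _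
  have hRsum : Summable (fun m =>
      |a| * (lam ^ 2)⁻¹ * (fa (m+1) * fb (m+2) * fc m)
      + |b| * (A1 m * fb (m+1) * fc m)
      + |a| * lam ^ 2 * (A1 m * B2 m * fc m)
      + |b| * lam ^ 2 * (A2 m * B1 m * fc m)) := ((hS1.add hS2).add hS3).add hS4
  have hFns : Summable (fun m =>
      ‖(((κ m ^ 2 * Real.exp (2 * τ * κ m ^ p)) : ℝ) : ℂ) * sabraB a b k0 lam u v m *
          starRingEnd ℂ (w m)‖) :=
    Summable.of_nonneg_of_le (fun m => norm_nonneg _) hpt hRsum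
  have hsqn : 0 ≤ Real.sqrt SA * Real.sqrt SB * Real.sqrt SC :=
    mul_nonneg (mul_nonneg (Real.sqrt_nonneg _) (Real.sqrt_nonneg _)) (Real.sqrt_nonneg _)
  calc ‖∑' n, (((κ n ^ 2 * Real.exp (2 * τ * κ n ^ p)) : ℝ) : ℂ) * sabraB a b k0 lam u v n *
          starRingEnd ℂ (w n)‖
      ≤ ∑' m, ‖(((κ m ^ 2 * Real.exp (2 * τ * κ m ^ p)) : ℝ) : ℂ) * sabraB a b k0 lam u v m *
          starRingEnd ℂ (w m)‖ := norm_tsum_le_tsum_norm hFns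
    _ ≤ ∑' m, (|a| * (lam ^ 2)⁻¹ * (fa (m+1) * fb (m+2) * fc m)
          + |b| * (A1 m * fb (m+1) * fc m)
          + |a| * lam ^ 2 * (A1 m * B2 m * fc m)
          + |b| * lam ^ 2 * (A2 m * B1 m * fc m)) := Summable.tsum_le_tsum hpt hFns hRsum
    _ = |a| * (lam ^ 2)⁻¹ * ∑' m, fa (m+1) * fb (m+2) * fc m
          + |b| * ∑' m, A1 m * fb (m+1) * fc m
          + |a| * lam ^ 2 * ∑' m, A1 m * B2 m * fc m
          + |b| * lam ^ 2 * ∑' m, A2 m * B1 m * fc m := by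
        rw [Summable.tsum_add ((hS1.add hS2).add hS3) hS4, Summable.tsum_add (hS1.add hS2) hS3,
          Summable.tsum_add hS1 hS2, tsum_mul_left, tsum_mul_left, tsum_mul_left, tsum_mul_left]
    _ ≤ |a| * (lam ^ 2)⁻¹ * (Real.sqrt SA * Real.sqrt SB * Real.sqrt SC)
          + |b| * (Real.sqrt SA * Real.sqrt SB * Real.sqrt SC)
          + |a| * lam ^ 2 * (Real.sqrt SA * Real.sqrt SB * Real.sqrt SC)
          + |b| * lam ^ 2 * (Real.sqrt SA * Real.sqrt SB * Real.sqrt SC) := by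
        apply add_le_add (add_le_add (add_le_add ?_ ?_) ?_) ?_
        · exact mul_le_mul_of_nonneg_left hQ1 (by positivity)
        · exact mul_le_mul_of_nonneg_left hQ2 (abs_nonneg b)
        · exact mul_le_mul_of_nonneg_left hQ3 (by positivity)
        · exact mul_le_mul_of_nonneg_left hQ4 (by positivity)
    _ = (|a| * ((lam ^ 2)⁻¹ + lam ^ 2) + |b| * (1 + lam ^ 2)) *
          Gnorm k0 lam p 1 τ u * Gnorm k0 lam p 1 τ v * Gnorm k0 lam p 1 τ w := by
        rw [hGu, hGv, hGw]; ring

end Sabra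
end
end

section
/- Let τ > 0 and 0 < p ≤ log_λ((1+√5)/2). For all u, v in the Gevrey class G^{p}_τ and w in G^{p,1}_τ, one has |(e^{τA^{p/2}} B(u,v), e^{τA^{p/2}} w)| ≤ C₆ |u|_{G^{p}_τ} |v|_{G^{p}_τ} ‖w‖_{G^{p,1}_τ}, where C₆ = λ|a| + |b| + λ^{-1}|c| and c = -a - b. -/
open scoped BigOperators
open MeasureTheory Filter Topology

noncomputable section

namespace Sabra

section Aux

open Real

private lemma sabra_summable_mul_of_sq {ι : Type} {x y : ι → ℝ} (hx0 : ∀ i, 0 ≤ x i)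
    (hy0 : ∀ i, 0 ≤ y i) (hx : Summable fun i => x i ^ 2) (hy : Summable fun i => y i ^ 2) :
    Summable fun i => x i * y i := by
  refine Summable.of_nonneg_of_le (fun i => mul_nonneg (hx0 i) (hy0 i)) (fun i => ?_)
    ((hx.add hy).mul_left (1 / 2))
  nlinarith [sq_nonneg (x i - y i)]

private lemma sabra_summable_sq_add {x y : ℤ → ℝ} (hx : Summable fun j => x j ^ 2)
    (hy : Summable fun j => y j ^ 2) : Summable fun j => (x j + y j) ^ 2 := by
  refine Summable.of_nonneg_of_le (fun j => sq_nonneg _) (fun j => ?_) ((hx.add hy).mul_left 2)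
  nlinarith [sq_nonneg (x j - y j)]

private lemma sabra_tsum_mul_le_sqrt {ι : Type} (x y : ι → ℝ) (hx0 : ∀ i, 0 ≤ x i)
    (hy0 : ∀ i, 0 ≤ y i) (hx : Summable fun i => x i ^ 2) (hy : Summable fun i => y i ^ 2) :
    ∑' i, x i * y i ≤ Real.sqrt (∑' i, x i ^ 2) * Real.sqrt (∑' i, y i ^ 2) := by
  refine Summable.tsum_le_of_sum_le (sabra_summable_mul_of_sq hx0 hy0 hx hy) fun s => ?_
  have h1 := Finset.sum_mul_sq_le_sq_mul_sq s x y
  have h2 : ∑ i ∈ s, x i ^ 2 ≤ ∑' i, x i ^ 2 := Summable.sum_le_tsum s (fun i _ => sq_nonneg _) hx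
  have h3 : ∑ i ∈ s, y i ^ 2 ≤ ∑' i, y i ^ 2 := Summable.sum_le_tsum s (fun i _ => sq_nonneg _) hy
  have h4 : (0:ℝ) ≤ ∑ i ∈ s, x i * y i :=
    Finset.sum_nonneg fun i _ => mul_nonneg (hx0 i) (hy0 i)
  have h5 : (∑ i ∈ s, x i * y i) ^ 2 ≤ (∑' i, x i ^ 2) * (∑' i, y i ^ 2) :=
    h1.trans (mul_le_mul h2 h3 (Finset.sum_nonneg fun i _ => sq_nonneg _)
      (tsum_nonneg fun i => sq_nonneg _))
  calc ∑ i ∈ s, x i * y i = Real.sqrt ((∑ i ∈ s, x i * y i) ^ 2) := (Real.sqrt_sq h4).symm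
    _ ≤ Real.sqrt ((∑' i, x i ^ 2) * (∑' i, y i ^ 2)) := Real.sqrt_le_sqrt h5
    _ = _ := Real.sqrt_mul (tsum_nonneg fun i => sq_nonneg _) _

private lemma sabra_shift_inj : Function.Injective (fun n : ℕ => (n : ℤ) + 1) := by
  intro a b h
  simpa using h

private lemma sabra_tsum_shift_eq (g : ℤ → ℝ) (hg0 : ∀ j : ℤ, j ≤ 0 → g j = 0) :
    ∑' n : ℕ, g ((n : ℤ) + 1) = ∑' j : ℤ, g j := by
  refine Function.Injective.tsum_eq sabra_shift_inj ?_
  intro j hj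
  rcases lt_or_ge 0 j with h | h
  · exact ⟨(j - 1).toNat, by simp; omega⟩
  · exact absurd (hg0 j h) hj

private lemma sabra_summable_shift (g : ℤ → ℝ) (hg0 : ∀ j : ℤ, j ≤ 0 → g j = 0) :
    Summable (fun n : ℕ => g ((n : ℤ) + 1)) ↔ Summable g := by
  refine Function.Injective.summable_iff sabra_shift_inj ?_
  intro j hj
  apply hg0
  by_contra hc
  push_neg at hc
  exact hj ⟨(j - 1).toNat, by simp; omega⟩

end Aux




section Key

open Real

set_option maxHeartbeats 1000000 in
/-- Key ledger lemma. -/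
private lemma sabra_key_ledger (lam A B : ℝ) (hlam : 1 < lam) (hA : 0 ≤ A) (hB : 0 ≤ B)
    (P Q : ℤ → ℝ) (hP0 : ∀ j, 0 ≤ P j) (hQ0 : ∀ j, 0 ≤ Q j)
    (hP : Summable fun j => P j ^ 2) (hQ : Summable fun j => Q j ^ 2) :
    Summable (fun j : ℤ => (lam * A * (P (j+1) * Q (j+2)) + B * (P (j-1) * Q (j+1))
        + lam⁻¹ * A * (P (j-1) * Q (j-2)) + lam⁻¹ * B * (P (j-2) * Q (j-1))) ^ 2) ∧
    ∑' j : ℤ, (lam * A * (P (j+1) * Q (j+2)) + B * (P (j-1) * Q (j+1))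
        + lam⁻¹ * A * (P (j-1) * Q (j-2)) + lam⁻¹ * B * (P (j-2) * Q (j-1))) ^ 2
      ≤ (lam * A + B) ^ 2 * ((∑' j : ℤ, P j ^ 2) * (∑' j : ℤ, Q j ^ 2)) := by
  have hlam0 : (0:ℝ) < lam := lt_trans one_pos hlam
  have hmu0 : (0:ℝ) ≤ lam⁻¹ := inv_nonneg.2 hlam0.le
  have hmu1 : lam⁻¹ ≤ 1 := by
    rw [inv_le_one_iff₀]; right; exact hlam.le
  have hSQ0 : 0 ≤ ∑' j : ℤ, Q j ^ 2 := tsum_nonneg fun j => sq_nonneg _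
  have hQle : ∀ t : ℤ, Q t ^ 2 ≤ ∑' j : ℤ, Q j ^ 2 := fun t => Summable.le_tsum hQ t fun _ _ => sq_nonneg _
  have hDsum : ∀ t : ℤ, Summable (fun j : ℤ => P j ^ 2 * Q (j + t) ^ 2) := by
    intro t
    refine Summable.of_nonneg_of_le (fun j => mul_nonneg (sq_nonneg _) (sq_nonneg _))
      (fun j => ?_) (hP.mul_right (∑' j : ℤ, Q j ^ 2))
    exact mul_le_mul_of_nonneg_left (hQle (j + t)) (sq_nonneg _)
  set D : ℤ → ℝ := fun t => ∑' j : ℤ, P j ^ 2 * Q (j + t) ^ 2 with hDdef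
  have hD0 : ∀ t, 0 ≤ D t := fun t => tsum_nonneg fun j => mul_nonneg (sq_nonneg _) (sq_nonneg _)
  have hSsh : ∀ s t : ℤ, Summable (fun j : ℤ => P (j + s) ^ 2 * Q (j + t) ^ 2) := by
    intro s t
    have h2 := ((Equiv.addRight s).summable_iff
      (f := fun j : ℤ => P j ^ 2 * Q (j + (t - s)) ^ 2)).2 (hDsum (t - s))
    refine h2.congr fun j => ?_
    simp only [Function.comp_apply, Equiv.coe_addRight]
    rw [show j + s + (t - s) = j + t by ring]
  have hDsh : ∀ s t : ℤ, ∑' j : ℤ, P (j + s) ^ 2 * Q (j + t) ^ 2 = D (t - s) := by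
    intro s t
    have h := (Equiv.addRight s).tsum_eq (fun j : ℤ => P j ^ 2 * Q (j + (t - s)) ^ 2)
    rw [hDdef]
    dsimp only
    rw [← h]
    refine tsum_congr fun j => ?_
    simp only [Equiv.coe_addRight]
    rw [show j + s + (t - s) = j + t by ring]
  have hfix1 : ∀ j : ℤ, j + (-1) = j - 1 := fun j => by ring
  have hfix2 : ∀ j : ℤ, j + (-2) = j - 2 := fun j => by ring
  have hX1 : Summable (fun j : ℤ => (lam * A * (P (j+1) * Q (j+2))) ^ 2) := by
    have h := (hSsh 1 2).mul_left ((lam * A) ^ 2)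
    exact h.congr fun j => by ring
  have hX2 : Summable (fun j : ℤ => (B * (P (j-1) * Q (j+1))) ^ 2) := by
    have h := (hSsh (-1) 1).mul_left (B ^ 2)
    refine h.congr fun j => ?_
    rw [hfix1 j]; ring
  have hX3 : Summable (fun j : ℤ => (lam⁻¹ * A * (P (j-1) * Q (j-2))) ^ 2) := by
    have h := (hSsh (-1) (-2)).mul_left ((lam⁻¹ * A) ^ 2)
    refine h.congr fun j => ?_
    rw [hfix1 j, hfix2 j]; ring
  have hX4 : Summable (fun j : ℤ => (lam⁻¹ * B * (P (j-2) * Q (j-1))) ^ 2) := by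
    have h := (hSsh (-2) (-1)).mul_left ((lam⁻¹ * B) ^ 2)
    refine h.congr fun j => ?_
    rw [hfix1 j, hfix2 j]; ring
  have hPhisq : Summable (fun j : ℤ => (lam * A * (P (j+1) * Q (j+2)) + B * (P (j-1) * Q (j+1))
      + lam⁻¹ * A * (P (j-1) * Q (j-2)) + lam⁻¹ * B * (P (j-2) * Q (j-1))) ^ 2) := by
    have h12 := sabra_summable_sq_add hX1 hX2
    have h123 := sabra_summable_sq_add h12 hX3
    have h := sabra_summable_sq_add h123 hX4
    exact h.congr fun j => by ring
  refine ⟨hPhisq, ?_⟩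
  have hc10 : 0 ≤ lam * A := mul_nonneg hlam0.le hA
  have hc30 : 0 ≤ lam⁻¹ * A := mul_nonneg hmu0 hA
  have hc40 : 0 ≤ lam⁻¹ * B := mul_nonneg hmu0 hB
  have hc3A : lam⁻¹ * A ≤ lam * A := by nlinarith
  have hc42 : lam⁻¹ * B ≤ B := by nlinarith
  -- weight bounds
  have hprod1 : (lam*A)*(lam⁻¹*A) ≤ (lam*A)*(lam*A) := mul_le_mul_of_nonneg_left hc3A hc10
  have hprod2 : B*(lam⁻¹*A) ≤ B*(lam*A) := mul_le_mul_of_nonneg_left hc3A hB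
  have hprod3 : B*(lam⁻¹*B) ≤ B*B := mul_le_mul_of_nonneg_left hc42 hB
  have hprod4 : (lam*A)*(lam⁻¹*B) ≤ (lam*A)*B := mul_le_mul_of_nonneg_left hc42 hc10
  have hprod5 : (lam⁻¹*B)^2 ≤ B^2 := by nlinarith [hc40, hc42]
  have hprod6 : (lam⁻¹*A)*(lam⁻¹*B) ≤ (lam*A)*B :=
    (mul_le_mul_of_nonneg_right hc3A hc40).trans (mul_le_mul_of_nonneg_left hc42 hc10)
  have hprod7 : (lam⁻¹*A)^2 ≤ (lam*A)^2 := by nlinarith [hc30, hc3A]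
  have hAB0 : 0 ≤ (lam*A)*B := mul_nonneg hc10 hB
  have hw1 : ((lam*A)^2) + (((lam⁻¹*B)^2 + (lam⁻¹*A)*(lam⁻¹*B))) ≤ (lam*A + B)^2 := by
    nlinarith [hprod5, hprod6, hAB0]
  have hw2 : (B^2 + B*(lam⁻¹*A)) ≤ (lam*A + B)^2 := by
    nlinarith [hprod2, hAB0, sq_nonneg (lam*A)]
  have hwm1 : ((lam⁻¹*A)^2 + B*(lam⁻¹*A) + (lam⁻¹*A)*(lam⁻¹*B)) ≤ (lam*A + B)^2 := by
    nlinarith [hprod7, hprod2, hprod6, hAB0, sq_nonneg B]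
  have hw0 : ((lam*A)*B + B*(lam⁻¹*B)) ≤ (lam*A + B)^2 := by
    nlinarith [hprod3, hAB0, sq_nonneg (lam*A), sq_nonneg B]
  have hw3 : (((lam*A)*B + (lam*A)*(lam⁻¹*A)) + B*(lam⁻¹*B)) ≤ (lam*A + B)^2 := by
    nlinarith [hprod1, hprod3, hAB0]
  have hwm3 : ((lam*A)*(lam⁻¹*A)) ≤ (lam*A + B)^2 := by
    nlinarith [hprod1, hAB0, sq_nonneg B]
  have hwm2 : ((lam*A)*(lam⁻¹*B)) ≤ (lam*A + B)^2 := by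
    nlinarith [hprod4, hAB0, sq_nonneg (lam*A), sq_nonneg B]
  have hpt : ∀ j : ℤ,
      (lam * A * (P (j+1) * Q (j+2)) + B * (P (j-1) * Q (j+1))
        + lam⁻¹ * A * (P (j-1) * Q (j-2)) + lam⁻¹ * B * (P (j-2) * Q (j-1))) ^ 2 ≤
      ((lam*A)^2) * (P (j+1)^2 * Q (j+2)^2)
      + ((B^2 + B*(lam⁻¹*A)) * (P (j-1)^2 * Q (j+1)^2)
      + (((lam⁻¹*A)^2 + B*(lam⁻¹*A) + (lam⁻¹*A)*(lam⁻¹*B)) * (P (j-1)^2 * Q (j-2)^2)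
      + (((lam⁻¹*B)^2 + (lam⁻¹*A)*(lam⁻¹*B)) * (P (j-2)^2 * Q (j-1)^2)
      + (((lam*A)*B) * (P (j+1)^2 * Q (j+1)^2)
      + (((lam*A)*B + (lam*A)*(lam⁻¹*A)) * (P (j-1)^2 * Q (j+2)^2)
      + (((lam*A)*(lam⁻¹*A)) * (P (j+1)^2 * Q (j-2)^2)
      + (((lam*A)*(lam⁻¹*B)) * (P (j+1)^2 * Q (j-1)^2)
      + (((lam*A)*(lam⁻¹*B)) * (P (j-2)^2 * Q (j+2)^2)
      + ((B*(lam⁻¹*B)) * (P (j-1)^2 * Q (j-1)^2)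
      + (B*(lam⁻¹*B)) * (P (j-2)^2 * Q (j+1)^2)))))))))) := by
    intro j
    nlinarith [mul_nonneg (mul_nonneg hc10 hB) (sq_nonneg (P (j+1)*Q (j+1) - P (j-1)*Q (j+2))),
      mul_nonneg (mul_nonneg hc10 hc30) (sq_nonneg (P (j+1)*Q (j-2) - P (j-1)*Q (j+2))),
      mul_nonneg (mul_nonneg hc10 hc40) (sq_nonneg (P (j+1)*Q (j-1) - P (j-2)*Q (j+2))),
      mul_nonneg (mul_nonneg hB hc30) (sq_nonneg (P (j-1)*Q (j+1) - P (j-1)*Q (j-2))),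
      mul_nonneg (mul_nonneg hB hc40) (sq_nonneg (P (j-1)*Q (j-1) - P (j-2)*Q (j+1))),
      mul_nonneg (mul_nonneg hc30 hc40) (sq_nonneg (P (j-1)*Q (j-2) - P (j-2)*Q (j-1)))]
  -- summability of the 11 majorant pieces
  have hg1 : Summable (fun j : ℤ => ((lam*A)^2) * (P (j+1)^2 * Q (j+2)^2)) :=
    (hSsh 1 2).mul_left _
  have hg2 : Summable (fun j : ℤ => (B^2 + B*(lam⁻¹*A)) * (P (j-1)^2 * Q (j+1)^2)) := by
    refine ((hSsh (-1) 1).mul_left ((B^2 + B*(lam⁻¹*A)) : ℝ)).congr fun j => ?_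
    rw [hfix1 j]
  have hg3 : Summable (fun j : ℤ =>
      ((lam⁻¹*A)^2 + B*(lam⁻¹*A) + (lam⁻¹*A)*(lam⁻¹*B)) * (P (j-1)^2 * Q (j-2)^2)) := by
    refine ((hSsh (-1) (-2)).mul_left (((lam⁻¹*A)^2 + B*(lam⁻¹*A) + (lam⁻¹*A)*(lam⁻¹*B)) : ℝ)).congr fun j => ?_
    rw [hfix1 j, hfix2 j]
  have hg4 : Summable (fun j : ℤ =>
      ((lam⁻¹*B)^2 + (lam⁻¹*A)*(lam⁻¹*B)) * (P (j-2)^2 * Q (j-1)^2)) := by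
    refine ((hSsh (-2) (-1)).mul_left (((lam⁻¹*B)^2 + (lam⁻¹*A)*(lam⁻¹*B)) : ℝ)).congr fun j => ?_
    rw [hfix1 j, hfix2 j]
  have hg5 : Summable (fun j : ℤ => ((lam*A)*B) * (P (j+1)^2 * Q (j+1)^2)) :=
    (hSsh 1 1).mul_left _
  have hg6 : Summable (fun j : ℤ =>
      ((lam*A)*B + (lam*A)*(lam⁻¹*A)) * (P (j-1)^2 * Q (j+2)^2)) := by
    refine ((hSsh (-1) 2).mul_left (((lam*A)*B + (lam*A)*(lam⁻¹*A)) : ℝ)).congr fun j => ?_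
    rw [hfix1 j]
  have hg7 : Summable (fun j : ℤ => ((lam*A)*(lam⁻¹*A)) * (P (j+1)^2 * Q (j-2)^2)) := by
    refine ((hSsh 1 (-2)).mul_left (((lam*A)*(lam⁻¹*A)) : ℝ)).congr fun j => ?_
    rw [hfix2 j]
  have hg8 : Summable (fun j : ℤ => ((lam*A)*(lam⁻¹*B)) * (P (j+1)^2 * Q (j-1)^2)) := by
    refine ((hSsh 1 (-1)).mul_left (((lam*A)*(lam⁻¹*B)) : ℝ)).congr fun j => ?_
    rw [hfix1 j]
  have hg9 : Summable (fun j : ℤ => ((lam*A)*(lam⁻¹*B)) * (P (j-2)^2 * Q (j+2)^2)) := by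
    refine ((hSsh (-2) 2).mul_left (((lam*A)*(lam⁻¹*B)) : ℝ)).congr fun j => ?_
    rw [hfix2 j]
  have hg10 : Summable (fun j : ℤ => (B*(lam⁻¹*B)) * (P (j-1)^2 * Q (j-1)^2)) := by
    refine ((hSsh (-1) (-1)).mul_left ((B*(lam⁻¹*B)) : ℝ)).congr fun j => ?_
    rw [hfix1 j]
  have hg11 : Summable (fun j : ℤ => (B*(lam⁻¹*B)) * (P (j-2)^2 * Q (j+1)^2)) := by
    refine ((hSsh (-2) 1).mul_left ((B*(lam⁻¹*B)) : ℝ)).congr fun j => ?_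
    rw [hfix2 j]
  -- tsum values
  have ht1 : ∑' j : ℤ, ((lam*A)^2) * (P (j+1)^2 * Q (j+2)^2) = ((lam*A)^2) * D 1 := by
    rw [tsum_mul_left, hDsh 1 2]
    norm_num
  have ht2 : ∑' j : ℤ, (B^2 + B*(lam⁻¹*A)) * (P (j-1)^2 * Q (j+1)^2)
      = (B^2 + B*(lam⁻¹*A)) * D 2 := by
    have : ∀ j : ℤ, (B^2 + B*(lam⁻¹*A)) * (P (j-1)^2 * Q (j+1)^2)
        = (B^2 + B*(lam⁻¹*A)) * (P (j + (-1))^2 * Q (j+1)^2) := fun j => by rw [hfix1 j]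
    rw [tsum_congr this, tsum_mul_left, hDsh (-1) 1]
    norm_num
  have ht3 : ∑' j : ℤ, ((lam⁻¹*A)^2 + B*(lam⁻¹*A) + (lam⁻¹*A)*(lam⁻¹*B)) * (P (j-1)^2 * Q (j-2)^2)
      = ((lam⁻¹*A)^2 + B*(lam⁻¹*A) + (lam⁻¹*A)*(lam⁻¹*B)) * D (-1) := by
    have : ∀ j : ℤ, ((lam⁻¹*A)^2 + B*(lam⁻¹*A) + (lam⁻¹*A)*(lam⁻¹*B)) * (P (j-1)^2 * Q (j-2)^2)
        = ((lam⁻¹*A)^2 + B*(lam⁻¹*A) + (lam⁻¹*A)*(lam⁻¹*B)) * (P (j + (-1))^2 * Q (j + (-2))^2) :=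
      fun j => by rw [hfix1 j, hfix2 j]
    rw [tsum_congr this, tsum_mul_left, hDsh (-1) (-2)]
    norm_num
  have ht4 : ∑' j : ℤ, ((lam⁻¹*B)^2 + (lam⁻¹*A)*(lam⁻¹*B)) * (P (j-2)^2 * Q (j-1)^2)
      = ((lam⁻¹*B)^2 + (lam⁻¹*A)*(lam⁻¹*B)) * D 1 := by
    have : ∀ j : ℤ, ((lam⁻¹*B)^2 + (lam⁻¹*A)*(lam⁻¹*B)) * (P (j-2)^2 * Q (j-1)^2)
        = ((lam⁻¹*B)^2 + (lam⁻¹*A)*(lam⁻¹*B)) * (P (j + (-2))^2 * Q (j + (-1))^2) :=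
      fun j => by rw [hfix1 j, hfix2 j]
    rw [tsum_congr this, tsum_mul_left, hDsh (-2) (-1)]
    norm_num
  have ht5 : ∑' j : ℤ, ((lam*A)*B) * (P (j+1)^2 * Q (j+1)^2) = ((lam*A)*B) * D 0 := by
    rw [tsum_mul_left, hDsh 1 1]
    norm_num
  have ht6 : ∑' j : ℤ, ((lam*A)*B + (lam*A)*(lam⁻¹*A)) * (P (j-1)^2 * Q (j+2)^2)
      = ((lam*A)*B + (lam*A)*(lam⁻¹*A)) * D 3 := by
    have : ∀ j : ℤ, ((lam*A)*B + (lam*A)*(lam⁻¹*A)) * (P (j-1)^2 * Q (j+2)^2)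
        = ((lam*A)*B + (lam*A)*(lam⁻¹*A)) * (P (j + (-1))^2 * Q (j+2)^2) := fun j => by rw [hfix1 j]
    rw [tsum_congr this, tsum_mul_left, hDsh (-1) 2]
    norm_num
  have ht7 : ∑' j : ℤ, ((lam*A)*(lam⁻¹*A)) * (P (j+1)^2 * Q (j-2)^2)
      = ((lam*A)*(lam⁻¹*A)) * D (-3) := by
    have : ∀ j : ℤ, ((lam*A)*(lam⁻¹*A)) * (P (j+1)^2 * Q (j-2)^2)
        = ((lam*A)*(lam⁻¹*A)) * (P (j+1)^2 * Q (j + (-2))^2) := fun j => by rw [hfix2 j]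
    rw [tsum_congr this, tsum_mul_left, hDsh 1 (-2)]
    norm_num
  have ht8 : ∑' j : ℤ, ((lam*A)*(lam⁻¹*B)) * (P (j+1)^2 * Q (j-1)^2)
      = ((lam*A)*(lam⁻¹*B)) * D (-2) := by
    have : ∀ j : ℤ, ((lam*A)*(lam⁻¹*B)) * (P (j+1)^2 * Q (j-1)^2)
        = ((lam*A)*(lam⁻¹*B)) * (P (j+1)^2 * Q (j + (-1))^2) := fun j => by rw [hfix1 j]
    rw [tsum_congr this, tsum_mul_left, hDsh 1 (-1)]
    norm_num
  have ht9 : ∑' j : ℤ, ((lam*A)*(lam⁻¹*B)) * (P (j-2)^2 * Q (j+2)^2)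
      = ((lam*A)*(lam⁻¹*B)) * D 4 := by
    have : ∀ j : ℤ, ((lam*A)*(lam⁻¹*B)) * (P (j-2)^2 * Q (j+2)^2)
        = ((lam*A)*(lam⁻¹*B)) * (P (j + (-2))^2 * Q (j+2)^2) := fun j => by rw [hfix2 j]
    rw [tsum_congr this, tsum_mul_left, hDsh (-2) 2]
    norm_num
  have ht10 : ∑' j : ℤ, (B*(lam⁻¹*B)) * (P (j-1)^2 * Q (j-1)^2) = (B*(lam⁻¹*B)) * D 0 := by
    have : ∀ j : ℤ, (B*(lam⁻¹*B)) * (P (j-1)^2 * Q (j-1)^2)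
        = (B*(lam⁻¹*B)) * (P (j + (-1))^2 * Q (j + (-1))^2) := fun j => by rw [hfix1 j]
    rw [tsum_congr this, tsum_mul_left, hDsh (-1) (-1)]
    norm_num
  have ht11 : ∑' j : ℤ, (B*(lam⁻¹*B)) * (P (j-2)^2 * Q (j+1)^2) = (B*(lam⁻¹*B)) * D 3 := by
    have : ∀ j : ℤ, (B*(lam⁻¹*B)) * (P (j-2)^2 * Q (j+1)^2)
        = (B*(lam⁻¹*B)) * (P (j + (-2))^2 * Q (j+1)^2) := fun j => by rw [hfix2 j]
    rw [tsum_congr this, tsum_mul_left, hDsh (-2) 1]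
    norm_num
  -- the eight-diagonal bound
  have hQ8 : ∀ j : ℤ, Q (j + (-3)) ^ 2 + (Q (j + (-2)) ^ 2 + (Q (j + (-1)) ^ 2 + (Q (j + 0) ^ 2
      + (Q (j + 1) ^ 2 + (Q (j + 2) ^ 2 + (Q (j + 3) ^ 2 + Q (j + 4) ^ 2)))))) ≤
      ∑' t : ℤ, Q t ^ 2 := by
    intro j
    have himg : ∀ i ∈ Finset.range 8, ∀ k ∈ Finset.range 8,
        j + ((i : ℤ) - 3) = j + ((k : ℤ) - 3) → i = k := by
      intro i _ k _ h; omega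
    have hexp : Q (j + (-3)) ^ 2 + (Q (j + (-2)) ^ 2 + (Q (j + (-1)) ^ 2 + (Q (j + 0) ^ 2
        + (Q (j + 1) ^ 2 + (Q (j + 2) ^ 2 + (Q (j + 3) ^ 2 + Q (j + 4) ^ 2))))))
        = ∑ i ∈ Finset.range 8, Q (j + ((i : ℤ) - 3)) ^ 2 := by
      rw [Finset.sum_range_succ, Finset.sum_range_succ, Finset.sum_range_succ,
        Finset.sum_range_succ, Finset.sum_range_succ, Finset.sum_range_succ,
        Finset.sum_range_succ, Finset.sum_range_succ, Finset.sum_range_zero]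
      norm_num
      ring
    rw [hexp]
    have himeq := Finset.sum_image (f := fun t : ℤ => Q t ^ 2)
      (g := fun i : ℕ => j + ((i : ℤ) - 3)) (s := Finset.range 8) himg
    rw [← himeq]
    exact Summable.sum_le_tsum _ (fun t _ => sq_nonneg _) hQ
  have hD8 : D (-3) + (D (-2) + (D (-1) + (D 0 + (D 1 + (D 2 + (D 3 + D 4)))))) ≤
      (∑' j : ℤ, P j ^ 2) * (∑' j : ℤ, Q j ^ 2) := by
    have hr7 : Summable (fun j : ℤ => P j ^2 * Q (j + 3)^2 + P j ^2 * Q (j + 4)^2) :=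
      (hDsum 3).add (hDsum 4)
    have hr6 : Summable (fun j : ℤ => P j ^2 * Q (j + 2)^2 + (P j ^2 * Q (j + 3)^2
        + P j ^2 * Q (j + 4)^2)) := (hDsum 2).add hr7
    have hr5 : Summable (fun j : ℤ => P j ^2 * Q (j + 1)^2 + (P j ^2 * Q (j + 2)^2
        + (P j ^2 * Q (j + 3)^2 + P j ^2 * Q (j + 4)^2))) := (hDsum 1).add hr6
    have hr4 : Summable (fun j : ℤ => P j ^2 * Q (j + 0)^2 + (P j ^2 * Q (j + 1)^2
        + (P j ^2 * Q (j + 2)^2 + (P j ^2 * Q (j + 3)^2 + P j ^2 * Q (j + 4)^2)))) :=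
      (hDsum 0).add hr5
    have hr3 : Summable (fun j : ℤ => P j ^2 * Q (j + (-1))^2 + (P j ^2 * Q (j + 0)^2
        + (P j ^2 * Q (j + 1)^2 + (P j ^2 * Q (j + 2)^2 + (P j ^2 * Q (j + 3)^2
        + P j ^2 * Q (j + 4)^2))))) := (hDsum (-1)).add hr4
    have hr2 : Summable (fun j : ℤ => P j ^2 * Q (j + (-2))^2 + (P j ^2 * Q (j + (-1))^2
        + (P j ^2 * Q (j + 0)^2 + (P j ^2 * Q (j + 1)^2 + (P j ^2 * Q (j + 2)^2
        + (P j ^2 * Q (j + 3)^2 + P j ^2 * Q (j + 4)^2)))))) := (hDsum (-2)).add hr3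
    have hr1 : Summable (fun j : ℤ => P j ^2 * Q (j + (-3))^2 + (P j ^2 * Q (j + (-2))^2
        + (P j ^2 * Q (j + (-1))^2 + (P j ^2 * Q (j + 0)^2 + (P j ^2 * Q (j + 1)^2
        + (P j ^2 * Q (j + 2)^2 + (P j ^2 * Q (j + 3)^2 + P j ^2 * Q (j + 4)^2)))))))
      := (hDsum (-3)).add hr2
    have hcomb : D (-3) + (D (-2) + (D (-1) + (D 0 + (D 1 + (D 2 + (D 3 + D 4))))))
        = ∑' j : ℤ, (P j ^2 * Q (j + (-3))^2 + (P j ^2 * Q (j + (-2))^2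
          + (P j ^2 * Q (j + (-1))^2 + (P j ^2 * Q (j + 0)^2 + (P j ^2 * Q (j + 1)^2
          + (P j ^2 * Q (j + 2)^2 + (P j ^2 * Q (j + 3)^2 + P j ^2 * Q (j + 4)^2))))))) := by
      rw [Summable.tsum_add (hDsum (-3)) hr2, Summable.tsum_add (hDsum (-2)) hr3, Summable.tsum_add (hDsum (-1)) hr4,
        Summable.tsum_add (hDsum 0) hr5, Summable.tsum_add (hDsum 1) hr6, Summable.tsum_add (hDsum 2) hr7,
        Summable.tsum_add (hDsum 3) (hDsum 4)]
    rw [hcomb]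
    calc ∑' j : ℤ, (P j ^2 * Q (j + (-3))^2 + (P j ^2 * Q (j + (-2))^2
          + (P j ^2 * Q (j + (-1))^2 + (P j ^2 * Q (j + 0)^2 + (P j ^2 * Q (j + 1)^2
          + (P j ^2 * Q (j + 2)^2 + (P j ^2 * Q (j + 3)^2 + P j ^2 * Q (j + 4)^2)))))))
        ≤ ∑' j : ℤ, P j ^2 * (∑' t : ℤ, Q t ^ 2) := by
          refine Summable.tsum_le_tsum (fun j => ?_) hr1 (hP.mul_right _)
          calc P j ^2 * Q (j + (-3))^2 + (P j ^2 * Q (j + (-2))^2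
              + (P j ^2 * Q (j + (-1))^2 + (P j ^2 * Q (j + 0)^2 + (P j ^2 * Q (j + 1)^2
              + (P j ^2 * Q (j + 2)^2 + (P j ^2 * Q (j + 3)^2 + P j ^2 * Q (j + 4)^2))))))
              = P j ^2 * (Q (j + (-3)) ^ 2 + (Q (j + (-2)) ^ 2 + (Q (j + (-1)) ^ 2
                + (Q (j + 0) ^ 2 + (Q (j + 1) ^ 2 + (Q (j + 2) ^ 2
                + (Q (j + 3) ^ 2 + Q (j + 4) ^ 2))))))) := by ring
            _ ≤ P j ^2 * (∑' t : ℤ, Q t ^ 2) :=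
              mul_le_mul_of_nonneg_left (hQ8 j) (sq_nonneg _)
      _ = (∑' j : ℤ, P j ^ 2) * (∑' j : ℤ, Q j ^ 2) := tsum_mul_right
  -- assemble
  have hb1 := mul_le_mul_of_nonneg_right hw1 (hD0 1)
  have hb2 := mul_le_mul_of_nonneg_right hw2 (hD0 2)
  have hbm1 := mul_le_mul_of_nonneg_right hwm1 (hD0 (-1))
  have hb0 := mul_le_mul_of_nonneg_right hw0 (hD0 0)
  have hb3 := mul_le_mul_of_nonneg_right hw3 (hD0 3)
  have hbm3 := mul_le_mul_of_nonneg_right hwm3 (hD0 (-3))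
  have hbm2 := mul_le_mul_of_nonneg_right hwm2 (hD0 (-2))
  have hb4 := mul_le_mul_of_nonneg_right hwm2 (hD0 4)
  have hfin := mul_le_mul_of_nonneg_left hD8 (sq_nonneg (lam*A + B))
  calc ∑' j : ℤ, (lam * A * (P (j+1) * Q (j+2)) + B * (P (j-1) * Q (j+1))
        + lam⁻¹ * A * (P (j-1) * Q (j-2)) + lam⁻¹ * B * (P (j-2) * Q (j-1))) ^ 2
      ≤ ∑' j : ℤ, (((lam*A)^2) * (P (j+1)^2 * Q (j+2)^2)
      + ((B^2 + B*(lam⁻¹*A)) * (P (j-1)^2 * Q (j+1)^2)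
      + (((lam⁻¹*A)^2 + B*(lam⁻¹*A) + (lam⁻¹*A)*(lam⁻¹*B)) * (P (j-1)^2 * Q (j-2)^2)
      + (((lam⁻¹*B)^2 + (lam⁻¹*A)*(lam⁻¹*B)) * (P (j-2)^2 * Q (j-1)^2)
      + (((lam*A)*B) * (P (j+1)^2 * Q (j+1)^2)
      + (((lam*A)*B + (lam*A)*(lam⁻¹*A)) * (P (j-1)^2 * Q (j+2)^2)
      + (((lam*A)*(lam⁻¹*A)) * (P (j+1)^2 * Q (j-2)^2)
      + (((lam*A)*(lam⁻¹*B)) * (P (j+1)^2 * Q (j-1)^2)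
      + (((lam*A)*(lam⁻¹*B)) * (P (j-2)^2 * Q (j+2)^2)
      + ((B*(lam⁻¹*B)) * (P (j-1)^2 * Q (j-1)^2)
      + (B*(lam⁻¹*B)) * (P (j-2)^2 * Q (j+1)^2)))))))))))
        := Summable.tsum_le_tsum hpt hPhisq
          (hg1.add (hg2.add (hg3.add (hg4.add (hg5.add (hg6.add (hg7.add (hg8.add
            (hg9.add (hg10.add hg11))))))))))
    _ = ((lam*A)^2) * D 1 + ((B^2 + B*(lam⁻¹*A)) * D 2
        + (((lam⁻¹*A)^2 + B*(lam⁻¹*A) + (lam⁻¹*A)*(lam⁻¹*B)) * D (-1)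
        + (((lam⁻¹*B)^2 + (lam⁻¹*A)*(lam⁻¹*B)) * D 1
        + (((lam*A)*B) * D 0
        + (((lam*A)*B + (lam*A)*(lam⁻¹*A)) * D 3
        + (((lam*A)*(lam⁻¹*A)) * D (-3)
        + (((lam*A)*(lam⁻¹*B)) * D (-2)
        + (((lam*A)*(lam⁻¹*B)) * D 4
        + ((B*(lam⁻¹*B)) * D 0
        + (B*(lam⁻¹*B)) * D 3))))))))) := by
        rw [Summable.tsum_add hg1 (hg2.add (hg3.add (hg4.add (hg5.add (hg6.add (hg7.add (hg8.add
            (hg9.add (hg10.add hg11)))))))))]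
        rw [Summable.tsum_add hg2 (hg3.add (hg4.add (hg5.add (hg6.add (hg7.add (hg8.add
            (hg9.add (hg10.add hg11))))))))]
        rw [Summable.tsum_add hg3 (hg4.add (hg5.add (hg6.add (hg7.add (hg8.add
            (hg9.add (hg10.add hg11)))))))]
        rw [Summable.tsum_add hg4 (hg5.add (hg6.add (hg7.add (hg8.add (hg9.add (hg10.add hg11))))))]
        rw [Summable.tsum_add hg5 (hg6.add (hg7.add (hg8.add (hg9.add (hg10.add hg11)))))]
        rw [Summable.tsum_add hg6 (hg7.add (hg8.add (hg9.add (hg10.add hg11))))]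
        rw [Summable.tsum_add hg7 (hg8.add (hg9.add (hg10.add hg11)))]
        rw [Summable.tsum_add hg8 (hg9.add (hg10.add hg11))]
        rw [Summable.tsum_add hg9 (hg10.add hg11)]
        rw [Summable.tsum_add hg10 hg11]
        rw [ht1, ht2, ht3, ht4, ht5, ht6, ht7, ht8, ht9, ht10, ht11]
    _ ≤ (lam*A + B)^2 * (D (-3) + (D (-2) + (D (-1) + (D 0 + (D 1 + (D 2 + (D 3 + D 4)))))))
        := by linarith only [hb1, hb2, hbm1, hb0, hb3, hbm3, hbm2, hb4]
    _ ≤ (lam*A + B)^2 * ((∑' j : ℤ, P j ^ 2) * (∑' j : ℤ, Q j ^ 2)) := hfin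

end Key


set_option maxHeartbeats 2000000 in
/-- Gevrey estimate for the nonlinear term (weak version): for `τ > 0`,
`0 < p ≤ log_λ((1+√5)/2)`, `u, v ∈ G^{p}_τ` and `w ∈ G^{p,1}_τ`,
`|(e^{τA^{p/2}} B(u,v), e^{τA^{p/2}} w)| ≤ C₆ |u|_{G^p_τ} |v|_{G^p_τ} ‖w‖_{G^{p,1}_τ}`
with `C₆ = λ|a| + |b| + λ⁻¹|c|` and `c = -a - b`. -/
theorem sabra_gevrey_nonlinear_estimate_weak
    (a b c k0 lam τ p : ℝ) (hk0 : 0 < k0) (hlam : 1 < lam) (hτ : 0 < τ) (hp : 0 < p)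
    (habc : a + b + c = 0)
    (hple : p ≤ Real.logb lam ((1 + Real.sqrt 5) / 2))
    (u v w : ℕ → ℂ)
    (hu : memG k0 lam p 0 τ u) (hv : memG k0 lam p 0 τ v) (hw : memG k0 lam p 1 τ w) :
    ‖∑' n, ((Real.exp (2 * τ * kwav k0 lam n ^ p) : ℝ) : ℂ) *
        sabraB a b k0 lam u v n * starRingEnd ℂ (w n)‖ ≤
      (lam * |a| + |b| + lam⁻¹ * |c|) *
        Gnorm k0 lam p 0 τ u * Gnorm k0 lam p 0 τ v * Gnorm k0 lam p 1 τ w := by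

  have hlam0 : (0:ℝ) < lam := lt_trans one_pos hlam
  have hlamne : lam ≠ 0 := ne_of_gt hlam0
  have hmu0 : (0:ℝ) ≤ lam⁻¹ := inv_nonneg.2 hlam0.le
  have hkzpos : ∀ j : ℤ, 0 < k0 * lam ^ j := fun j => mul_pos hk0 (zpow_pos hlam0 j)
  set κ : ℤ → ℝ := fun j => (k0 * lam ^ j) ^ p with hκdef
  have hκpos : ∀ j, 0 < κ j := fun j => Real.rpow_pos_of_pos (hkzpos j) p
  have hκmono : ∀ j : ℤ, κ j ≤ κ (j+1) := by
    intro j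
    refine Real.rpow_le_rpow (hkzpos j).le ?_ hp.le
    have h := zpow_le_zpow_right₀ hlam.le (by omega : j ≤ j + 1)
    nlinarith [hk0.le, zpow_pos hlam0 j]
  have hgold : ∀ j : ℤ, κ (j+2) ≤ κ (j+1) + κ j := by
    intro j
    have hx0 : (0:ℝ) ≤ lam ^ p := (Real.rpow_pos_of_pos hlam0 p).le
    have hxle : lam ^ p ≤ (1 + Real.sqrt 5)/2 := by
      have h1 : lam ^ p ≤ lam ^ (Real.logb lam ((1+Real.sqrt 5)/2)) :=
        Real.rpow_le_rpow_of_exponent_le hlam.le hple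
      rwa [Real.rpow_logb hlam0 (ne_of_gt hlam) (by positivity)] at h1
    have hs5 : Real.sqrt 5 ^ 2 = 5 := Real.sq_sqrt (by norm_num)
    have hs5' : (0:ℝ) ≤ Real.sqrt 5 := Real.sqrt_nonneg 5
    have h51 : (1:ℝ) ≤ Real.sqrt 5 := by nlinarith [hs5, hs5']
    have hxp0 : (0:ℝ) ≤ lam ^ p - (1 - Real.sqrt 5)/2 := by linarith
    have hgq : (lam ^ p)^2 ≤ lam ^ p + 1 := by
      nlinarith [mul_nonneg (sub_nonneg.2 hxle) hxp0, hs5]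
    have hk1 : κ (j+1) = κ j * lam ^ p := by
      simp only [hκdef]
      rw [show k0 * lam ^ (j+1) = (k0 * lam ^ j) * lam by rw [zpow_add_one₀ hlamne]; ring,
        Real.mul_rpow (hkzpos j).le hlam0.le]
    have hk2 : κ (j+2) = κ j * (lam ^ p * lam ^ p) := by
      simp only [hκdef]
      rw [show k0 * lam ^ (j+2) = (k0 * lam ^ j) * (lam * lam) by
          rw [show j+2 = j+1+1 by ring, zpow_add_one₀ hlamne, zpow_add_one₀ hlamne]; ring,
        Real.mul_rpow (hkzpos j).le (by positivity), Real.mul_rpow hlam0.le hlam0.le]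
    rw [hk1, hk2]
    nlinarith [(hκpos j).le, hgq]
  set eG : ℤ → ℝ := fun j => Real.exp (τ * κ j) with heGdef
  have heG0 : ∀ j, 0 < eG j := fun j => Real.exp_pos _
  set P : ℤ → ℝ := fun j => eG j * ‖extz u j‖ with hPdef
  set Q : ℤ → ℝ := fun j => eG j * ‖extz v j‖ with hQdef
  set R : ℤ → ℝ := fun j => (k0 * lam ^ j) * (eG j * ‖extz w j‖) with hRdef
  have hP0 : ∀ j, 0 ≤ P j := fun j => mul_nonneg (heG0 j).le (norm_nonneg _)
  have hQ0 : ∀ j, 0 ≤ Q j := fun j => mul_nonneg (heG0 j).le (norm_nonneg _)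
  have hR0 : ∀ j, 0 ≤ R j := fun j =>
    mul_nonneg (hkzpos j).le (mul_nonneg (heG0 j).le (norm_nonneg _))
  have hext0 : ∀ (x : ℕ → ℂ) (j : ℤ), j ≤ 0 → extz x j = 0 := by
    intro x j hj
    simp only [extz, if_neg (by omega : ¬ (0:ℤ) < j)]
  have hextS : ∀ (x : ℕ → ℂ) (n : ℕ), extz x ((n:ℤ)+1) = x n := by
    intro x n
    simp only [extz, if_pos (by omega : (0:ℤ) < (n:ℤ)+1)]
    have harg : ((n:ℤ)+1).toNat - 1 = n := by omega
    rw [harg]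
  have hkwav : ∀ n : ℕ, kwav k0 lam n = k0 * lam ^ ((n:ℤ)+1) := by
    intro n
    rw [kwav, show ((n:ℤ)+1) = ((n+1:ℕ):ℤ) by push_cast; ring, zpow_natCast]
  have hkp : ∀ m : ℕ, kwav k0 lam m ^ p = κ ((m:ℤ)+1) := by
    intro m
    simp only [hκdef]
    rw [hkwav m]
  -- transfers of the three Gevrey sums to ℤ
  have hPg : ∀ n : ℕ, P ((n:ℤ)+1)^2
      = Real.exp (2*τ*kwav k0 lam n^p) * kwav k0 lam n ^ (2*(0:ℝ)) * ‖u n‖^2 := by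
    intro n
    simp only [hPdef, heGdef, hextS u n]
    rw [hkp n, show (2*(0:ℝ)) = 0 by norm_num, Real.rpow_zero,
      show Real.exp (2*τ*κ ((n:ℤ)+1)) = Real.exp (τ*κ ((n:ℤ)+1)) ^ 2 by
        rw [sq, ← Real.exp_add]; congr 1; ring]
    ring
  have hQg : ∀ n : ℕ, Q ((n:ℤ)+1)^2
      = Real.exp (2*τ*kwav k0 lam n^p) * kwav k0 lam n ^ (2*(0:ℝ)) * ‖v n‖^2 := by
    intro n
    simp only [hQdef, heGdef, hextS v n]
    rw [hkp n, show (2*(0:ℝ)) = 0 by norm_num, Real.rpow_zero,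
      show Real.exp (2*τ*κ ((n:ℤ)+1)) = Real.exp (τ*κ ((n:ℤ)+1)) ^ 2 by
        rw [sq, ← Real.exp_add]; congr 1; ring]
    ring
  have hRg : ∀ n : ℕ, R ((n:ℤ)+1)^2
      = Real.exp (2*τ*kwav k0 lam n^p) * kwav k0 lam n ^ (2*(1:ℝ)) * ‖w n‖^2 := by
    intro n
    simp only [hRdef, heGdef, hextS w n]
    rw [hkp n, show (2*(1:ℝ)) = ((2:ℕ):ℝ) by norm_num, Real.rpow_natCast, hkwav n,
      show Real.exp (2*τ*κ ((n:ℤ)+1)) = Real.exp (τ*κ ((n:ℤ)+1)) ^ 2 by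
        rw [sq, ← Real.exp_add]; congr 1; ring]
    ring
  have hPz : ∀ j : ℤ, j ≤ 0 → P j ^ 2 = 0 := by
    intro j hj
    simp only [hPdef, hext0 u j hj, norm_zero, mul_zero, ne_eq, OfNat.ofNat_ne_zero,
      not_false_eq_true, zero_pow]
  have hQz : ∀ j : ℤ, j ≤ 0 → Q j ^ 2 = 0 := by
    intro j hj
    simp only [hQdef, hext0 v j hj, norm_zero, mul_zero, ne_eq, OfNat.ofNat_ne_zero,
      not_false_eq_true, zero_pow]
  have hRz : ∀ j : ℤ, j ≤ 0 → R j = 0 := by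
    intro j hj
    simp only [hRdef, hext0 w j hj, norm_zero, mul_zero]
  have hPsum : Summable (fun j : ℤ => P j ^ 2) :=
    (sabra_summable_shift (fun j => P j ^ 2) hPz).1 (hu.congr fun n => (hPg n).symm)
  have hQsum : Summable (fun j : ℤ => Q j ^ 2) :=
    (sabra_summable_shift (fun j => Q j ^ 2) hQz).1 (hv.congr fun n => (hQg n).symm)
  have hRsum : Summable (fun j : ℤ => R j ^ 2) :=
    (sabra_summable_shift (fun j => R j ^ 2) (fun j hj => by show R j ^ 2 = 0; rw [hRz j hj]; norm_num)).1
      (hw.congr fun n => (hRg n).symm)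
  have hGu : Real.sqrt (∑' j : ℤ, P j ^ 2) = Gnorm k0 lam p 0 τ u := by
    rw [Gnorm, ← sabra_tsum_shift_eq (fun j => P j ^ 2) hPz, tsum_congr hPg]
  have hGv : Real.sqrt (∑' j : ℤ, Q j ^ 2) = Gnorm k0 lam p 0 τ v := by
    rw [Gnorm, ← sabra_tsum_shift_eq (fun j => Q j ^ 2) hQz, tsum_congr hQg]
  have hGw : Real.sqrt (∑' j : ℤ, R j ^ 2) = Gnorm k0 lam p 1 τ w := by
    rw [Gnorm, ← sabra_tsum_shift_eq (fun j => R j ^ 2) (fun j hj => by show R j ^ 2 = 0; rw [hRz j hj]; norm_num),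
      tsum_congr hRg]
  -- the ledger
  have hled := sabra_key_ledger lam |a| |b| hlam (abs_nonneg a) (abs_nonneg b) P Q hP0 hQ0
    hPsum hQsum
  set Φ : ℤ → ℝ := fun j => lam * |a| * (P (j+1) * Q (j+2)) + |b| * (P (j-1) * Q (j+1))
      + lam⁻¹ * |a| * (P (j-1) * Q (j-2)) + lam⁻¹ * |b| * (P (j-2) * Q (j-1)) with hΦdef
  have hΦ0 : ∀ j, 0 ≤ Φ j := by
    intro j
    have h1 : 0 ≤ lam * |a| := mul_nonneg hlam0.le (abs_nonneg a)
    have h3 : 0 ≤ lam⁻¹ * |a| := mul_nonneg hmu0 (abs_nonneg a)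
    have h4 : 0 ≤ lam⁻¹ * |b| := mul_nonneg hmu0 (abs_nonneg b)
    simp only [hΦdef]
    have hPQ : ∀ s t : ℤ, 0 ≤ P s * Q t := fun s t => mul_nonneg (hP0 s) (hQ0 t)
    positivity
  have hΦsq : Summable (fun j : ℤ => Φ j ^ 2) := hled.1
  have hΦRsum : Summable (fun j : ℤ => Φ j * R j) :=
    sabra_summable_mul_of_sq hΦ0 hR0 hΦsq hRsum
  have hΦRz : ∀ j : ℤ, j ≤ 0 → Φ j * R j = 0 := fun j hj => by rw [hRz j hj, mul_zero]
  have hsubN : Summable (fun m : ℕ => Φ ((m:ℤ)+1) * R ((m:ℤ)+1)) :=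
    (hΦRsum.comp_injective sabra_shift_inj).congr fun n => rfl
  -- pointwise bound
  have h4norm : ∀ z1 z2 z3 z4 : ℂ, ‖z1+z2+z3+z4‖ ≤ ‖z1‖+‖z2‖+‖z3‖+‖z4‖ := by
    intro z1 z2 z3 z4
    calc ‖z1+z2+z3+z4‖ ≤ ‖z1+z2+z3‖+‖z4‖ := norm_add_le _ _
      _ ≤ (‖z1+z2‖+‖z3‖)+‖z4‖ := by gcongr; exact norm_add_le _ _
      _ ≤ ‖z1‖+‖z2‖+‖z3‖+‖z4‖ := by gcongr; exact norm_add_le _ _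
  have hnt : ∀ (r s : ℝ) (z1 z2 : ℂ), 0 < s →
      ‖(r:ℂ) * (s:ℂ) * z1 * (starRingEnd ℂ) z2‖ = |r| * s * (‖z1‖*‖z2‖) := by
    intro r s z1 z2 hs
    rw [norm_mul, norm_mul, norm_mul, Complex.norm_real, Complex.norm_real,
      Real.norm_eq_abs, Real.norm_eq_abs, abs_of_pos hs, RCLike.norm_conj]
    ring
  have hnt' : ∀ (r s : ℝ) (z1 z2 : ℂ), 0 < s →
      ‖(r:ℂ) * (s:ℂ) * z1 * z2‖ = |r| * s * (‖z1‖*‖z2‖) := by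
    intro r s z1 z2 hs
    rw [norm_mul, norm_mul, norm_mul, Complex.norm_real, Complex.norm_real,
      Real.norm_eq_abs, Real.norm_eq_abs, abs_of_pos hs]
    ring
  have hPB : ∀ m : ℕ, ‖((Real.exp (2 * τ * kwav k0 lam m ^ p) : ℝ) : ℂ) *
      sabraB a b k0 lam u v m * starRingEnd ℂ (w m)‖ ≤ Φ ((m:ℤ)+1) * R ((m:ℤ)+1) := by
    intro m
    have hwm : extz w ((m:ℤ)+1) = w m := hextS w m
    have hE : ‖((Real.exp (2*τ*kwav k0 lam m^p) : ℝ) : ℂ)‖ = Real.exp (2*τ*kwav k0 lam m^p) := by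
      rw [Complex.norm_real, Real.norm_eq_abs, abs_of_pos (Real.exp_pos _)]
    have hBnorm : ‖sabraB a b k0 lam u v m‖ ≤
        |a| * (k0*lam^((m:ℤ)+2)) * (‖extz v ((m:ℤ)+3)‖ * ‖extz u ((m:ℤ)+2)‖)
        + |b| * (k0*lam^((m:ℤ)+1)) * (‖extz v ((m:ℤ)+2)‖ * ‖extz u (m:ℤ)‖)
        + |a| * (k0*lam^(m:ℤ)) * (‖extz u (m:ℤ)‖ * ‖extz v ((m:ℤ)-1)‖)
        + |b| * (k0*lam^(m:ℤ)) * (‖extz v (m:ℤ)‖ * ‖extz u ((m:ℤ)-1)‖) := by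
      simp only [sabraB, kz]
      rw [norm_mul, norm_neg, Complex.norm_I, one_mul]
      refine (h4norm _ _ _ _).trans ?_
      rw [hnt a _ _ _ (hkzpos _), hnt b _ _ _ (hkzpos _), hnt' a _ _ _ (hkzpos _),
        hnt' b _ _ _ (hkzpos _)]
    have hEle : ∀ i j : ℤ, κ ((m:ℤ)+1) ≤ κ i + κ j →
        Real.exp (2*τ*kwav k0 lam m ^ p) ≤ eG i * eG j * eG ((m:ℤ)+1) := by
      intro i j hij
      rw [hkp m]
      simp only [heGdef]
      rw [← Real.exp_add, ← Real.exp_add]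
      apply Real.exp_le_exp.2
      nlinarith [mul_nonneg hτ.le (sub_nonneg.2 hij)]
    have hTA : Real.exp (2*τ*kwav k0 lam m^p) *
        (|a| * (k0*lam^((m:ℤ)+2)) * (‖extz v ((m:ℤ)+3)‖ * ‖extz u ((m:ℤ)+2)‖)) * ‖w m‖
        ≤ (lam * |a| * (P ((m:ℤ)+2) * Q ((m:ℤ)+3))) * R ((m:ℤ)+1) := by
      have hcore := hEle ((m:ℤ)+2) ((m:ℤ)+3) (by
        have h1 := hκmono ((m:ℤ)+1)
        have h2 := (hκpos ((m:ℤ)+3)).le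
        rw [show (m:ℤ)+1+1 = (m:ℤ)+2 by ring] at h1
        linarith)
      have hkzstep : k0 * lam ^ ((m:ℤ)+2) = lam * (k0 * lam ^ ((m:ℤ)+1)) := by
        rw [show (m:ℤ)+2 = ((m:ℤ)+1)+1 by ring, zpow_add_one₀ hlamne]; ring
      have hco : (0:ℝ) ≤ |a| * (lam * (k0*lam^((m:ℤ)+1)))
          * (‖extz v ((m:ℤ)+3)‖ * ‖extz u ((m:ℤ)+2)‖ * ‖w m‖) :=
        mul_nonneg (mul_nonneg (abs_nonneg a) (mul_nonneg hlam0.le (hkzpos _).le))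
          (by positivity)
      calc Real.exp (2*τ*kwav k0 lam m^p) *
          (|a| * (k0*lam^((m:ℤ)+2)) * (‖extz v ((m:ℤ)+3)‖ * ‖extz u ((m:ℤ)+2)‖)) * ‖w m‖
          = (|a| * (lam * (k0*lam^((m:ℤ)+1)))
            * (‖extz v ((m:ℤ)+3)‖ * ‖extz u ((m:ℤ)+2)‖ * ‖w m‖))
            * Real.exp (2*τ*kwav k0 lam m^p) := by rw [hkzstep]; ring
        _ ≤ (|a| * (lam * (k0*lam^((m:ℤ)+1)))
            * (‖extz v ((m:ℤ)+3)‖ * ‖extz u ((m:ℤ)+2)‖ * ‖w m‖))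
            * (eG ((m:ℤ)+2) * eG ((m:ℤ)+3) * eG ((m:ℤ)+1)) :=
          mul_le_mul_of_nonneg_left hcore hco
        _ = (lam * |a| * (P ((m:ℤ)+2) * Q ((m:ℤ)+3))) * R ((m:ℤ)+1) := by
          simp only [hPdef, hQdef, hRdef, hwm]
          ring
    have hTB : Real.exp (2*τ*kwav k0 lam m^p) *
        (|b| * (k0*lam^((m:ℤ)+1)) * (‖extz v ((m:ℤ)+2)‖ * ‖extz u (m:ℤ)‖)) * ‖w m‖
        ≤ (|b| * (P (m:ℤ) * Q ((m:ℤ)+2))) * R ((m:ℤ)+1) := by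
      have hcore := hEle (m:ℤ) ((m:ℤ)+2) (by
        have h1 := hκmono ((m:ℤ)+1)
        have h2 := (hκpos (m:ℤ)).le
        rw [show (m:ℤ)+1+1 = (m:ℤ)+2 by ring] at h1
        linarith)
      have hco : (0:ℝ) ≤ |b| * (k0*lam^((m:ℤ)+1))
          * (‖extz v ((m:ℤ)+2)‖ * ‖extz u (m:ℤ)‖ * ‖w m‖) :=
        mul_nonneg (mul_nonneg (abs_nonneg b) (hkzpos _).le) (by positivity)
      calc Real.exp (2*τ*kwav k0 lam m^p) *
          (|b| * (k0*lam^((m:ℤ)+1)) * (‖extz v ((m:ℤ)+2)‖ * ‖extz u (m:ℤ)‖)) * ‖w m‖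
          = (|b| * (k0*lam^((m:ℤ)+1)) * (‖extz v ((m:ℤ)+2)‖ * ‖extz u (m:ℤ)‖ * ‖w m‖))
            * Real.exp (2*τ*kwav k0 lam m^p) := by ring
        _ ≤ (|b| * (k0*lam^((m:ℤ)+1)) * (‖extz v ((m:ℤ)+2)‖ * ‖extz u (m:ℤ)‖ * ‖w m‖))
            * (eG (m:ℤ) * eG ((m:ℤ)+2) * eG ((m:ℤ)+1)) := mul_le_mul_of_nonneg_left hcore hco
        _ = (|b| * (P (m:ℤ) * Q ((m:ℤ)+2))) * R ((m:ℤ)+1) := by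
          simp only [hPdef, hQdef, hRdef, hwm]
          ring
    have hgold' : κ ((m:ℤ)+1) ≤ κ (m:ℤ) + κ ((m:ℤ)-1) := by
      have h := hgold ((m:ℤ)-1)
      rw [show (m:ℤ)-1+2 = (m:ℤ)+1 by ring, show (m:ℤ)-1+1 = (m:ℤ) by ring] at h
      exact h
    have hkzstep' : k0 * lam ^ (m:ℤ) = lam⁻¹ * (k0 * lam ^ ((m:ℤ)+1)) := by
      rw [zpow_add_one₀ hlamne]
      field_simp
    have hTC : Real.exp (2*τ*kwav k0 lam m^p) *
        (|a| * (k0*lam^(m:ℤ)) * (‖extz u (m:ℤ)‖ * ‖extz v ((m:ℤ)-1)‖)) * ‖w m‖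
        ≤ (lam⁻¹ * |a| * (P (m:ℤ) * Q ((m:ℤ)-1))) * R ((m:ℤ)+1) := by
      have hcore := hEle (m:ℤ) ((m:ℤ)-1) hgold'
      have hco : (0:ℝ) ≤ |a| * (lam⁻¹ * (k0*lam^((m:ℤ)+1)))
          * (‖extz u (m:ℤ)‖ * ‖extz v ((m:ℤ)-1)‖ * ‖w m‖) :=
        mul_nonneg (mul_nonneg (abs_nonneg a) (mul_nonneg hmu0 (hkzpos _).le)) (by positivity)
      calc Real.exp (2*τ*kwav k0 lam m^p) *
          (|a| * (k0*lam^(m:ℤ)) * (‖extz u (m:ℤ)‖ * ‖extz v ((m:ℤ)-1)‖)) * ‖w m‖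
          = (|a| * (lam⁻¹ * (k0*lam^((m:ℤ)+1)))
            * (‖extz u (m:ℤ)‖ * ‖extz v ((m:ℤ)-1)‖ * ‖w m‖))
            * Real.exp (2*τ*kwav k0 lam m^p) := by rw [hkzstep']; ring
        _ ≤ (|a| * (lam⁻¹ * (k0*lam^((m:ℤ)+1)))
            * (‖extz u (m:ℤ)‖ * ‖extz v ((m:ℤ)-1)‖ * ‖w m‖))
            * (eG (m:ℤ) * eG ((m:ℤ)-1) * eG ((m:ℤ)+1)) := mul_le_mul_of_nonneg_left hcore hco
        _ = (lam⁻¹ * |a| * (P (m:ℤ) * Q ((m:ℤ)-1))) * R ((m:ℤ)+1) := by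
          simp only [hPdef, hQdef, hRdef, hwm]
          ring
    have hTD : Real.exp (2*τ*kwav k0 lam m^p) *
        (|b| * (k0*lam^(m:ℤ)) * (‖extz v (m:ℤ)‖ * ‖extz u ((m:ℤ)-1)‖)) * ‖w m‖
        ≤ (lam⁻¹ * |b| * (P ((m:ℤ)-1) * Q (m:ℤ))) * R ((m:ℤ)+1) := by
      have hcore := hEle ((m:ℤ)-1) (m:ℤ) (by linarith [hgold'])
      have hco : (0:ℝ) ≤ |b| * (lam⁻¹ * (k0*lam^((m:ℤ)+1)))
          * (‖extz v (m:ℤ)‖ * ‖extz u ((m:ℤ)-1)‖ * ‖w m‖) :=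
        mul_nonneg (mul_nonneg (abs_nonneg b) (mul_nonneg hmu0 (hkzpos _).le)) (by positivity)
      calc Real.exp (2*τ*kwav k0 lam m^p) *
          (|b| * (k0*lam^(m:ℤ)) * (‖extz v (m:ℤ)‖ * ‖extz u ((m:ℤ)-1)‖)) * ‖w m‖
          = (|b| * (lam⁻¹ * (k0*lam^((m:ℤ)+1)))
            * (‖extz v (m:ℤ)‖ * ‖extz u ((m:ℤ)-1)‖ * ‖w m‖))
            * Real.exp (2*τ*kwav k0 lam m^p) := by rw [hkzstep']; ring
        _ ≤ (|b| * (lam⁻¹ * (k0*lam^((m:ℤ)+1)))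
            * (‖extz v (m:ℤ)‖ * ‖extz u ((m:ℤ)-1)‖ * ‖w m‖))
            * (eG ((m:ℤ)-1) * eG (m:ℤ) * eG ((m:ℤ)+1)) := mul_le_mul_of_nonneg_left hcore hco
        _ = (lam⁻¹ * |b| * (P ((m:ℤ)-1) * Q (m:ℤ))) * R ((m:ℤ)+1) := by
          simp only [hPdef, hQdef, hRdef, hwm]
          ring
    have hΦm : Φ ((m:ℤ)+1) = lam * |a| * (P ((m:ℤ)+2) * Q ((m:ℤ)+3))
        + |b| * (P (m:ℤ) * Q ((m:ℤ)+2)) + lam⁻¹ * |a| * (P (m:ℤ) * Q ((m:ℤ)-1))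
        + lam⁻¹ * |b| * (P ((m:ℤ)-1) * Q (m:ℤ)) := by
      simp only [hΦdef]
      rw [show ((m:ℤ)+1)+1 = (m:ℤ)+2 by ring, show ((m:ℤ)+1)+2 = (m:ℤ)+3 by ring,
        show ((m:ℤ)+1)-1 = (m:ℤ) by ring, show ((m:ℤ)+1)-2 = (m:ℤ)-1 by ring]
    calc ‖((Real.exp (2 * τ * kwav k0 lam m ^ p) : ℝ) : ℂ) *
        sabraB a b k0 lam u v m * starRingEnd ℂ (w m)‖
        = Real.exp (2*τ*kwav k0 lam m^p) * ‖sabraB a b k0 lam u v m‖ * ‖w m‖ := by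
          rw [norm_mul, norm_mul, hE, RCLike.norm_conj]
      _ ≤ Real.exp (2*τ*kwav k0 lam m^p) *
          (|a| * (k0*lam^((m:ℤ)+2)) * (‖extz v ((m:ℤ)+3)‖ * ‖extz u ((m:ℤ)+2)‖)
          + |b| * (k0*lam^((m:ℤ)+1)) * (‖extz v ((m:ℤ)+2)‖ * ‖extz u (m:ℤ)‖)
          + |a| * (k0*lam^(m:ℤ)) * (‖extz u (m:ℤ)‖ * ‖extz v ((m:ℤ)-1)‖)
          + |b| * (k0*lam^(m:ℤ)) * (‖extz v (m:ℤ)‖ * ‖extz u ((m:ℤ)-1)‖)) * ‖w m‖ := by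
          apply mul_le_mul_of_nonneg_right
            (mul_le_mul_of_nonneg_left hBnorm (Real.exp_pos _).le) (norm_nonneg _)
      _ ≤ Φ ((m:ℤ)+1) * R ((m:ℤ)+1) := by
          rw [hΦm]
          have hsplit : Real.exp (2*τ*kwav k0 lam m^p) *
            (|a| * (k0*lam^((m:ℤ)+2)) * (‖extz v ((m:ℤ)+3)‖ * ‖extz u ((m:ℤ)+2)‖)
            + |b| * (k0*lam^((m:ℤ)+1)) * (‖extz v ((m:ℤ)+2)‖ * ‖extz u (m:ℤ)‖)
            + |a| * (k0*lam^(m:ℤ)) * (‖extz u (m:ℤ)‖ * ‖extz v ((m:ℤ)-1)‖)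
            + |b| * (k0*lam^(m:ℤ)) * (‖extz v (m:ℤ)‖ * ‖extz u ((m:ℤ)-1)‖)) * ‖w m‖
            = Real.exp (2*τ*kwav k0 lam m^p) *
              (|a| * (k0*lam^((m:ℤ)+2)) * (‖extz v ((m:ℤ)+3)‖ * ‖extz u ((m:ℤ)+2)‖)) * ‖w m‖
            + Real.exp (2*τ*kwav k0 lam m^p) *
              (|b| * (k0*lam^((m:ℤ)+1)) * (‖extz v ((m:ℤ)+2)‖ * ‖extz u (m:ℤ)‖)) * ‖w m‖
            + Real.exp (2*τ*kwav k0 lam m^p) *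
              (|a| * (k0*lam^(m:ℤ)) * (‖extz u (m:ℤ)‖ * ‖extz v ((m:ℤ)-1)‖)) * ‖w m‖
            + Real.exp (2*τ*kwav k0 lam m^p) *
              (|b| * (k0*lam^(m:ℤ)) * (‖extz v (m:ℤ)‖ * ‖extz u ((m:ℤ)-1)‖)) * ‖w m‖ := by
            ring
          rw [hsplit]
          have := add_le_add (add_le_add (add_le_add hTA hTB) hTC) hTD
          calc _ ≤ (lam * |a| * (P ((m:ℤ)+2) * Q ((m:ℤ)+3))) * R ((m:ℤ)+1)
              + (|b| * (P (m:ℤ) * Q ((m:ℤ)+2))) * R ((m:ℤ)+1)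
              + (lam⁻¹ * |a| * (P (m:ℤ) * Q ((m:ℤ)-1))) * R ((m:ℤ)+1)
              + (lam⁻¹ * |b| * (P ((m:ℤ)-1) * Q (m:ℤ))) * R ((m:ℤ)+1) := this
            _ = (lam * |a| * (P ((m:ℤ)+2) * Q ((m:ℤ)+3))
              + |b| * (P (m:ℤ) * Q ((m:ℤ)+2)) + lam⁻¹ * |a| * (P (m:ℤ) * Q ((m:ℤ)-1))
              + lam⁻¹ * |b| * (P ((m:ℤ)-1) * Q (m:ℤ))) * R ((m:ℤ)+1) := by ring
  -- assemble
  have hnormsum : Summable (fun m : ℕ => ‖((Real.exp (2 * τ * kwav k0 lam m ^ p) : ℝ) : ℂ) *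
      sabraB a b k0 lam u v m * starRingEnd ℂ (w m)‖) :=
    Summable.of_nonneg_of_le (fun m => norm_nonneg _) hPB hsubN
  have hGu0 : 0 ≤ Gnorm k0 lam p 0 τ u := by rw [Gnorm]; exact Real.sqrt_nonneg _
  have hGv0 : 0 ≤ Gnorm k0 lam p 0 τ v := by rw [Gnorm]; exact Real.sqrt_nonneg _
  have hGw0 : 0 ≤ Gnorm k0 lam p 1 τ w := by rw [Gnorm]; exact Real.sqrt_nonneg _
  have hcle : lam * |a| + |b| ≤ lam * |a| + |b| + lam⁻¹ * |c| :=
    le_add_of_nonneg_right (mul_nonneg hmu0 (abs_nonneg c))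
  have hstep4 : Real.sqrt (∑' j : ℤ, Φ j ^ 2)
      ≤ (lam * |a| + |b|) * (Real.sqrt (∑' j : ℤ, P j ^ 2) * Real.sqrt (∑' j : ℤ, Q j ^ 2)) := by
    calc Real.sqrt (∑' j : ℤ, Φ j ^ 2)
        ≤ Real.sqrt ((lam * |a| + |b|) ^ 2 * ((∑' j : ℤ, P j ^ 2) * (∑' j : ℤ, Q j ^ 2))) :=
          Real.sqrt_le_sqrt hled.2
      _ = (lam * |a| + |b|) * (Real.sqrt (∑' j : ℤ, P j ^ 2) * Real.sqrt (∑' j : ℤ, Q j ^ 2)) := by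
          rw [Real.sqrt_mul (sq_nonneg _), Real.sqrt_sq (by positivity),
            Real.sqrt_mul (tsum_nonneg fun j => sq_nonneg _)]
  calc ‖∑' n, ((Real.exp (2 * τ * kwav k0 lam n ^ p) : ℝ) : ℂ) *
        sabraB a b k0 lam u v n * starRingEnd ℂ (w n)‖
      ≤ ∑' m : ℕ, ‖((Real.exp (2 * τ * kwav k0 lam m ^ p) : ℝ) : ℂ) *
        sabraB a b k0 lam u v m * starRingEnd ℂ (w m)‖ := norm_tsum_le_tsum_norm hnormsum
    _ ≤ ∑' m : ℕ, Φ ((m:ℤ)+1) * R ((m:ℤ)+1) := Summable.tsum_le_tsum hPB hnormsum hsubN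
    _ = ∑' j : ℤ, Φ j * R j := sabra_tsum_shift_eq (fun j => Φ j * R j) hΦRz
    _ ≤ Real.sqrt (∑' j : ℤ, Φ j ^ 2) * Real.sqrt (∑' j : ℤ, R j ^ 2) :=
        sabra_tsum_mul_le_sqrt Φ R hΦ0 hR0 hΦsq hRsum
    _ ≤ ((lam * |a| + |b|) * (Real.sqrt (∑' j : ℤ, P j ^ 2) * Real.sqrt (∑' j : ℤ, Q j ^ 2)))
        * Real.sqrt (∑' j : ℤ, R j ^ 2) :=
        mul_le_mul_of_nonneg_right hstep4 (Real.sqrt_nonneg _)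
    _ = (lam * |a| + |b|) * Gnorm k0 lam p 0 τ u * Gnorm k0 lam p 0 τ v
        * Gnorm k0 lam p 1 τ w := by rw [hGu, hGv, hGw]; ring
    _ ≤ (lam * |a| + |b| + lam⁻¹ * |c|) * Gnorm k0 lam p 0 τ u * Gnorm k0 lam p 0 τ v
        * Gnorm k0 lam p 1 τ w := by
        exact mul_le_mul_of_nonneg_right (mul_le_mul_of_nonneg_right
          (mul_le_mul_of_nonneg_right hcle hGu0) hGv0) hGw0


end Sabra
end
end
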